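/- arXiv:2110.15420 — 2 statements merged into one kernel-verified Lean document; each statement's English description precedes it below -/
import Mathlib

section
/- Let A ∈ ℂ^{m×N} and s ≥ 1 be such that the restricted isometry constant of A of order 6s satisfies δ_{6s} < 1/√3. Then there exist constants C, D > 0 depending only on δ_{6s} such that the following holds. For every x ∈ ℂ^N and e ∈ ℂ^m, set y = Ax + e, and let (x^{(n)})_{n≥0} be any sequence with x^{(0)} = 0 and x^{(n+1)} = H_{2s}(x^{(n)} + A*(y − A x^{(n)})) for all n ≥ 0 (the Iterative Hard Thresholding iteration with sparsity parameter 2s). Then for every n ≥ 0, ‖x − x^{(n)}‖_{ℓ²} ≤ (C/√s)·σ_s(x)_{ℓ¹} + D‖e‖_{ℓ²} + ρ^n‖x‖_{ℓ²}, where ρ = √3·δ_{6s} < 1. -/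
open Matrix Finset

/-- The ℓ² norm of a finite-dimensional complex vector. -/
noncomputable def l2norm {ι : Type*} [Fintype ι] (x : ι → ℂ) : ℝ :=
  Real.sqrt (∑ i, ‖x i‖ ^ 2)

/-- The ℓ¹ norm of a finite-dimensional complex vector. -/
noncomputable def l1norm {ι : Type*} [Fintype ι] (x : ι → ℂ) : ℝ :=
  ∑ i, ‖x i‖

/-- `x` is `s`-sparse: its support has at most `s` elements. -/
def IsSparse {ι : Type*} (s : ℕ) (x : ι → ℂ) : Prop :=
  (Function.support x).ncard ≤ s

/-- The `s`-th restricted isometry constant of `A`. -/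
noncomputable def RIC {m N : ℕ} (A : Matrix (Fin m) (Fin N) ℂ) (s : ℕ) : ℝ :=
  sInf {δ : ℝ | 0 ≤ δ ∧ ∀ x : Fin N → ℂ, IsSparse s x →
    (1 - δ) * l2norm x ^ 2 ≤ l2norm (A *ᵥ x) ^ 2 ∧
      l2norm (A *ᵥ x) ^ 2 ≤ (1 + δ) * l2norm x ^ 2}

/-- The ℓ¹-norm best `s`-term approximation error `σ_s(x)_{ℓ¹}`. -/
noncomputable def sigmaL1 {N : ℕ} (s : ℕ) (x : Fin N → ℂ) : ℝ :=
  sInf {t : ℝ | ∃ z : Fin N → ℂ, IsSparse s z ∧ t = l1norm (x - z)}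

/-- `z = H_s(x)`: `z` retains `s` largest-in-magnitude entries of `x` (ties broken
arbitrarily) and sets all other entries to zero. -/
def IsHT {N : ℕ} (s : ℕ) (x z : Fin N → ℂ) : Prop :=
  ∃ S : Finset (Fin N), S.card = min s N ∧
    (∀ i ∈ S, z i = x i) ∧ (∀ i ∉ S, z i = 0) ∧
    ∀ i ∈ S, ∀ j ∉ S, ‖x j‖ ≤ ‖x i‖

open scoped InnerProductSpace ComplexConjugate



noncomputable def E {n : ℕ} (x : Fin n → ℂ) : EuclideanSpace ℂ (Fin n) :=
  (WithLp.equiv 2 _).symm x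

lemma E_apply {n : ℕ} (x : Fin n → ℂ) (i : Fin n) : E x i = x i := rfl

lemma l2norm_eq {n : ℕ} (x : Fin n → ℂ) : l2norm x = ‖E x‖ := by
  rw [EuclideanSpace.norm_eq]; rfl

lemma l2_nonneg {n : ℕ} (x : Fin n → ℂ) : 0 ≤ l2norm x := Real.sqrt_nonneg _

lemma l2_sq {n : ℕ} (x : Fin n → ℂ) : l2norm x ^ 2 = ∑ i, ‖x i‖ ^ 2 :=
  Real.sq_sqrt (by positivity)

lemma E_add {n : ℕ} (x y : Fin n → ℂ) : E (x + y) = E x + E y := rfl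
lemma E_sub {n : ℕ} (x y : Fin n → ℂ) : E (x - y) = E x - E y := rfl
lemma E_smul {n : ℕ} (c : ℂ) (x : Fin n → ℂ) : E (c • x) = c • E x := rfl
lemma E_zero {n : ℕ} : E (0 : Fin n → ℂ) = 0 := rfl

lemma l2_sub_rev {n : ℕ} (x y : Fin n → ℂ) : l2norm (x - y) = l2norm (y - x) := by
  rw [l2norm_eq, l2norm_eq, E_sub, E_sub, norm_sub_rev]

lemma l2_triangle {n : ℕ} (x y : Fin n → ℂ) : l2norm (x + y) ≤ l2norm x + l2norm y := by
  rw [l2norm_eq, l2norm_eq, l2norm_eq, E_add]; exact norm_add_le _ _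

lemma inner_E {n : ℕ} (x y : Fin n → ℂ) : ⟪E x, E y⟫_ℂ = star x ⬝ᵥ y := by
  rw [PiLp.inner_apply]
  simp only [RCLike.inner_apply, starRingEnd_apply]
  exact Finset.sum_congr rfl fun i _ => mul_comm _ _

lemma inner_mulVec {m n : ℕ} (A : Matrix (Fin m) (Fin n) ℂ) (u : Fin n → ℂ) (v : Fin m → ℂ) :
    ⟪E (A *ᵥ u), E v⟫_ℂ = ⟪E u, E (Aᴴ *ᵥ v)⟫_ℂ := by
  rw [inner_E, inner_E, star_mulVec, ← dotProduct_mulVec]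


variable {m N : ℕ}

noncomputable def res (S : Finset (Fin N)) (x : Fin N → ℂ) : Fin N → ℂ :=
  fun i => if i ∈ S then x i else 0

lemma res_add (S : Finset (Fin N)) (x y : Fin N → ℂ) :
    res S (x + y) = res S x + res S y := by
  funext i; by_cases h : i ∈ S <;> simp [res, h]

lemma res_sub (S : Finset (Fin N)) (x y : Fin N → ℂ) :
    res S (x - y) = res S x - res S y := by
  funext i; by_cases h : i ∈ S <;> simp [res, h]

lemma res_neg (S : Finset (Fin N)) (x : Fin N → ℂ) : res S (-x) = -res S x := by
  funext i; by_cases h : i ∈ S <;> simp [res, h]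

lemma res_zero_off (S : Finset (Fin N)) (x : Fin N → ℂ) (i : Fin N) (h : i ∉ S) :
    res S x i = 0 := if_neg h

lemma l2_sq_res (S : Finset (Fin N)) (x : Fin N → ℂ) :
    l2norm (res S x) ^ 2 = ∑ i ∈ S, ‖x i‖ ^ 2 := by
  rw [l2norm]
  rw [Real.sq_sqrt (by positivity)]
  rw [← Finset.univ_inter S, ← Finset.sum_ite_mem]
  congr 1; funext i
  by_cases h : i ∈ S <;> simp [res, h]

lemma isSparse_of (x : Fin N → ℂ) (S : Finset (Fin N)) (h0 : ∀ i ∉ S, x i = 0)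
    (k : ℕ) (hk : S.card ≤ k) : IsSparse k x := by
  have hsub : Function.support x ⊆ ↑S := by
    intro i hi
    by_contra h
    exact hi (h0 i h)
  have := Set.ncard_le_ncard hsub (Finset.finite_toSet S)
  rw [Set.ncard_coe_finset] at this
  exact this.trans hk

/-- generic domination sum lemma -/
lemma sum_le_sum_of_dom (f : Fin N → ℝ) (hf : ∀ i, 0 ≤ f i) (S T : Finset (Fin N))
    (hcard : T.card ≤ S.card) (hdom : ∀ i ∈ S, ∀ j ∉ S, f j ≤ f i) :
    ∑ i ∈ T, f i ≤ ∑ i ∈ S, f i := by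
  have hTS : (T \ S).card ≤ (S \ T).card := by
    have h1 := Finset.card_sdiff_add_card_inter T S
    have h2 := Finset.card_sdiff_add_card_inter S T
    rw [Finset.inter_comm] at h2
    omega
  have key : ∑ i ∈ T \ S, f i ≤ ∑ i ∈ S \ T, f i := by
    by_cases hne : (S \ T).Nonempty
    · obtain ⟨j₀, hj₀, hj₀eq⟩ := Finset.exists_mem_eq_inf' hne f
      have hub : ∀ i ∈ T \ S, f i ≤ (S \ T).inf' hne f := by
        intro i hi
        rw [hj₀eq]
        exact hdom j₀ (Finset.mem_sdiff.mp hj₀).1 i (Finset.mem_sdiff.mp hi).2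
      calc ∑ i ∈ T \ S, f i ≤ (T \ S).card • (S \ T).inf' hne f :=
            Finset.sum_le_card_nsmul _ _ _ hub
        _ ≤ (S \ T).card • (S \ T).inf' hne f := by
            apply nsmul_le_nsmul_left _ hTS
            rw [hj₀eq]; exact hf j₀
        _ ≤ ∑ i ∈ S \ T, f i := Finset.card_nsmul_le_sum _ _ _ (fun i _ => Finset.inf'_le f ‹i ∈ S \ T›)
    · rw [Finset.not_nonempty_iff_eq_empty] at hne
      rw [hne, Finset.card_empty, Nat.le_zero, Finset.card_eq_zero] at hTS
      rw [hTS, hne]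
  have h1 := Finset.sum_inter_add_sum_sdiff T S f
  have h2 := Finset.sum_inter_add_sum_sdiff S T f
  rw [Finset.inter_comm] at h2
  linarith

/-- construct / extend a set of largest entries -/
lemma exists_dom_superset (f : Fin N → ℝ) (R S₀ : Finset (Fin N)) (h₀ : S₀ ⊆ R)
    (hdom₀ : ∀ i ∈ S₀, ∀ j ∈ R, j ∉ S₀ → f j ≤ f i) (k : ℕ) :
    ∃ S : Finset (Fin N), S₀ ⊆ S ∧ S ⊆ R ∧ S.card = min (S₀.card + k) R.card ∧
      ∀ i ∈ S, ∀ j ∈ R, j ∉ S → f j ≤ f i := by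
  induction k with
  | zero =>
    refine ⟨S₀, Finset.Subset.refl _, h₀, ?_, hdom₀⟩
    have := Finset.card_le_card h₀
    omega
  | succ k ih =>
    obtain ⟨S, hS₀S, hSR, hcard, hdom⟩ := ih
    by_cases hSR' : S = R
    · refine ⟨S, hS₀S, hSR, ?_, hdom⟩
      have : S.card = R.card := by rw [hSR']
      omega
    · have hne : (R \ S).Nonempty := by
        rw [Finset.sdiff_nonempty]
        intro h
        exact hSR' (Finset.Subset.antisymm hSR h)
      obtain ⟨j₀, hj₀, hj₀max⟩ := Finset.exists_max_image (R \ S) f hne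
      have hj₀R : j₀ ∈ R := (Finset.mem_sdiff.mp hj₀).1
      have hj₀S : j₀ ∉ S := (Finset.mem_sdiff.mp hj₀).2
      refine ⟨insert j₀ S, hS₀S.trans (Finset.subset_insert _ _),
        Finset.insert_subset hj₀R hSR, ?_, ?_⟩
      · rw [Finset.card_insert_of_notMem hj₀S]
        have hlt : S.card < R.card :=
          Finset.card_lt_card (Finset.ssubset_iff_subset_ne.mpr ⟨hSR, hSR'⟩)
        omega
      · intro i hi j hjR hj
        have hjS : j ∉ S := fun h => hj (Finset.mem_insert_of_mem h)
        rcases Finset.mem_insert.mp hi with rfl | hiS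
        · exact hj₀max j (Finset.mem_sdiff.mpr ⟨hjR, hjS⟩)
        · exact hdom i hiS j hjR hjS


def RIPset (A : Matrix (Fin m) (Fin N) ℂ) (t : ℕ) : Set ℝ :=
  {δ : ℝ | 0 ≤ δ ∧ ∀ x : Fin N → ℂ, IsSparse t x →
    (1 - δ) * l2norm x ^ 2 ≤ l2norm (A *ᵥ x) ^ 2 ∧
      l2norm (A *ᵥ x) ^ 2 ≤ (1 + δ) * l2norm x ^ 2}

lemma RIC_eq (A : Matrix (Fin m) (Fin N) ℂ) (t : ℕ) : RIC A t = sInf (RIPset A t) := rfl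

lemma entry_le_l2 (x : Fin N → ℂ) (j : Fin N) : ‖x j‖ ≤ l2norm x := by
  have h2 : ‖x j‖ ^ 2 ≤ ∑ i, ‖x i‖ ^ 2 :=
    Finset.single_le_sum (f := fun i => ‖x i‖ ^ 2) (fun i _ => by positivity) (Finset.mem_univ j)
  calc ‖x j‖ = Real.sqrt (‖x j‖ ^ 2) := (Real.sqrt_sq (norm_nonneg _)).symm
    _ ≤ l2norm x := Real.sqrt_le_sqrt h2

lemma mulVec_l2_bound (A : Matrix (Fin m) (Fin N) ℂ) (x : Fin N → ℂ) :
    l2norm (A *ᵥ x) ^ 2 ≤ (∑ i, (∑ j, ‖A i j‖) ^ 2) * l2norm x ^ 2 := by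
  have key : ∀ i, ‖(A *ᵥ x) i‖ ≤ (∑ j, ‖A i j‖) * l2norm x := by
    intro i
    have h1 : (A *ᵥ x) i = ∑ j, A i j * x j := by
      simp [Matrix.mulVec, dotProduct]
    rw [h1]
    calc ‖∑ j, A i j * x j‖ ≤ ∑ j, ‖A i j * x j‖ := norm_sum_le _ _
      _ = ∑ j, ‖A i j‖ * ‖x j‖ := by simp [norm_mul]
      _ ≤ ∑ j, ‖A i j‖ * l2norm x := by
          refine Finset.sum_le_sum fun j _ => ?_
          exact mul_le_mul_of_nonneg_left (entry_le_l2 x j) (norm_nonneg _)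
      _ = (∑ j, ‖A i j‖) * l2norm x := by rw [Finset.sum_mul]
  rw [l2_sq]
  calc ∑ i, ‖(A *ᵥ x) i‖ ^ 2 ≤ ∑ i, ((∑ j, ‖A i j‖) * l2norm x) ^ 2 := by
        refine Finset.sum_le_sum fun i _ => ?_
        exact pow_le_pow_left₀ (norm_nonneg _) (key i) 2
    _ = (∑ i, (∑ j, ‖A i j‖) ^ 2) * l2norm x ^ 2 := by
        rw [Finset.sum_mul]
        exact Finset.sum_congr rfl fun i _ => (mul_pow _ _ 2)

lemma RIPset_nonempty (A : Matrix (Fin m) (Fin N) ℂ) (t : ℕ) : (RIPset A t).Nonempty := by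
  refine ⟨(∑ i, (∑ j, ‖A i j‖) ^ 2) + 1, by positivity, fun x _ => ⟨?_, ?_⟩⟩
  · have h1 : (1 - ((∑ i, (∑ j, ‖A i j‖) ^ 2) + 1)) * l2norm x ^ 2 ≤ 0 := by
      apply mul_nonpos_of_nonpos_of_nonneg
      · have : (0:ℝ) ≤ ∑ i, (∑ j, ‖A i j‖) ^ 2 := by positivity
        linarith
      · positivity
    exact h1.trans (by positivity)
  · have := mulVec_l2_bound A x
    nlinarith [l2_nonneg x, sq_nonneg (l2norm x)]

lemma RIC_nonneg (A : Matrix (Fin m) (Fin N) ℂ) (t : ℕ) : 0 ≤ RIC A t :=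
  le_csInf (RIPset_nonempty A t) (fun _ hδ => hδ.1)

lemma RIPset_bddBelow (A : Matrix (Fin m) (Fin N) ℂ) (t : ℕ) : BddBelow (RIPset A t) :=
  ⟨0, fun _ hδ => hδ.1⟩

lemma RIC_mem (A : Matrix (Fin m) (Fin N) ℂ) (t : ℕ) : RIC A t ∈ RIPset A t := by
  constructor
  · exact RIC_nonneg A t
  intro x hx
  constructor
  · -- (1 - RIC) * L ≤ R
    by_cases hL : l2norm x ^ 2 = 0
    · rw [hL, mul_zero]; positivity
    have hLpos : 0 < l2norm x ^ 2 := lt_of_le_of_ne (by positivity) (Ne.symm hL)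
    apply le_of_forall_pos_le_add
    intro ε hε
    obtain ⟨δ, hδmem, hδlt⟩ := Real.lt_sInf_add_pos (RIPset_nonempty A t)
      (div_pos hε hLpos)
    have h1 := (hδmem.2 x hx).1
    have : (1 - (RIC A t + ε / l2norm x ^ 2)) * l2norm x ^ 2 ≤ (1 - δ) * l2norm x ^ 2 := by
      apply mul_le_mul_of_nonneg_right _ (le_of_lt hLpos)
      rw [RIC_eq]
      linarith
    calc (1 - RIC A t) * l2norm x ^ 2
        = (1 - (RIC A t + ε / l2norm x ^ 2)) * l2norm x ^ 2 + ε := by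
          linear_combination (div_mul_cancel₀ ε hL)
      _ ≤ (1 - δ) * l2norm x ^ 2 + ε := by linarith
      _ ≤ l2norm (A *ᵥ x) ^ 2 + ε := by linarith
  · by_cases hL : l2norm x ^ 2 = 0
    · have h0 : (0:ℝ) ∈ RIPset A t ∨ True := Or.inr trivial
      -- upper: R ≤ (1+RIC)*0 = 0; need R = 0 : use any member δ
      obtain ⟨δ, hδ⟩ := RIPset_nonempty A t
      have := (hδ.2 x hx).2
      rw [hL, mul_zero] at this ⊢
      exact this
    have hLpos : 0 < l2norm x ^ 2 := lt_of_le_of_ne (by positivity) (Ne.symm hL)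
    apply le_of_forall_pos_le_add
    intro ε hε
    obtain ⟨δ, hδmem, hδlt⟩ := Real.lt_sInf_add_pos (RIPset_nonempty A t)
      (div_pos hε hLpos)
    have h1 := (hδmem.2 x hx).2
    rw [RIC_eq]
    calc l2norm (A *ᵥ x) ^ 2 ≤ (1 + δ) * l2norm x ^ 2 := h1
      _ ≤ (1 + sInf (RIPset A t) + ε / l2norm x ^ 2) * l2norm x ^ 2 := by
          apply mul_le_mul_of_nonneg_right _ (le_of_lt hLpos)
          linarith
      _ = (1 + sInf (RIPset A t)) * l2norm x ^ 2 + ε := by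
          linear_combination (div_mul_cancel₀ ε hL)

section RIPlem

variable {m N : ℕ} (A : Matrix (Fin m) (Fin N) ℂ) (δ : ℝ) (t : ℕ)

lemma inner_res_self (S : Finset (Fin N)) (w : Fin N → ℂ) :
    ⟪E (res S w), E w⟫_ℂ = ((l2norm (res S w) ^ 2 : ℝ) : ℂ) := by
  rw [inner_E, l2_sq_res]
  push_cast
  rw [show (star (res S w) ⬝ᵥ w) = ∑ i, (if i ∈ S then star (w i) * w i else 0) by
    apply Finset.sum_congr rfl
    intro i _
    by_cases h : i ∈ S <;> simp [res, h]]
  rw [← Finset.univ_inter S, ← Finset.sum_ite_mem, Finset.univ_inter]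
  apply Finset.sum_congr rfl
  intro i _
  rw [show (star (w i)) = (starRingEnd ℂ) (w i) from rfl, RCLike.conj_mul]
  norm_num

lemma step3core (hδ0 : 0 ≤ δ)
    (HH : ∀ (w : Fin N → ℂ) (S : Finset (Fin N)), (∀ i ∉ S, w i = 0) → S.card ≤ t →
      |l2norm (A *ᵥ w) ^ 2 - l2norm w ^ 2| ≤ δ * l2norm w ^ 2)
    (u v : Fin N → ℂ) (Su Sv : Finset (Fin N))
    (hu : ∀ i ∉ Su, u i = 0) (hv : ∀ i ∉ Sv, v i = 0)
    (hcard : (Su ∪ Sv).card ≤ t) :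
    |RCLike.re (⟪E u, E (Aᴴ *ᵥ (A *ᵥ v) - v)⟫_ℂ)|
      ≤ δ * (l2norm u ^ 2 + l2norm v ^ 2) / 2 := by
  have hsum : ∀ i ∉ Su ∪ Sv, (u + v) i = 0 := by
    intro i hi
    have h1 := hu i (fun h => hi (Finset.mem_union_left _ h))
    have h2 := hv i (fun h => hi (Finset.mem_union_right _ h))
    simp [h1, h2]
  have hdiff : ∀ i ∉ Su ∪ Sv, (u - v) i = 0 := by
    intro i hi
    have h1 := hu i (fun h => hi (Finset.mem_union_left _ h))
    have h2 := hv i (fun h => hi (Finset.mem_union_right _ h))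
    simp [h1, h2]
  have h1 := HH (u + v) _ hsum hcard
  have h2 := HH (u - v) _ hdiff hcard
  have hsplit : ⟪E u, E (Aᴴ *ᵥ (A *ᵥ v) - v)⟫_ℂ
      = ⟪E (A *ᵥ u), E (A *ᵥ v)⟫_ℂ - ⟪E u, E v⟫_ℂ := by
    rw [E_sub, inner_sub_right, inner_mulVec]
  have p1 : RCLike.re (⟪E (A *ᵥ u), E (A *ᵥ v)⟫_ℂ)
      = (l2norm (A *ᵥ (u + v)) ^ 2 - l2norm (A *ᵥ (u - v)) ^ 2) / 4 := by
    rw [re_inner_eq_norm_add_mul_self_sub_norm_sub_mul_self_div_four]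
    rw [show E (A *ᵥ u) + E (A *ᵥ v) = E (A *ᵥ (u + v)) by rw [Matrix.mulVec_add]; rfl]
    rw [show E (A *ᵥ u) - E (A *ᵥ v) = E (A *ᵥ (u - v)) by rw [Matrix.mulVec_sub]; rfl]
    rw [← l2norm_eq, ← l2norm_eq]; ring
  have p2 : RCLike.re (⟪E u, E v⟫_ℂ)
      = (l2norm (u + v) ^ 2 - l2norm (u - v) ^ 2) / 4 := by
    rw [re_inner_eq_norm_add_mul_self_sub_norm_sub_mul_self_div_four]
    rw [← E_add, ← E_sub, ← l2norm_eq, ← l2norm_eq]; ring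
  have par : l2norm (u + v) ^ 2 + l2norm (u - v) ^ 2
      = 2 * (l2norm u ^ 2 + l2norm v ^ 2) := by
    have hp := parallelogram_law_with_norm ℂ (E u) (E v)
    rw [← E_add, ← E_sub, ← l2norm_eq, ← l2norm_eq, ← l2norm_eq, ← l2norm_eq] at hp
    linear_combination hp
  have hpar2 : δ * (l2norm (u + v) ^ 2 + l2norm (u - v) ^ 2)
      = δ * (2 * (l2norm u ^ 2 + l2norm v ^ 2)) := by rw [par]
  rw [hsplit, map_sub, p1, p2]
  rw [abs_le] at h1 h2 ⊢
  constructor <;> · rw [mul_add] at hpar2; linarith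

lemma step3 (hδ0 : 0 ≤ δ)
    (HH : ∀ (w : Fin N → ℂ) (S : Finset (Fin N)), (∀ i ∉ S, w i = 0) → S.card ≤ t →
      |l2norm (A *ᵥ w) ^ 2 - l2norm w ^ 2| ≤ δ * l2norm w ^ 2)
    (u v : Fin N → ℂ) (Su Sv : Finset (Fin N))
    (hu : ∀ i ∉ Su, u i = 0) (hv : ∀ i ∉ Sv, v i = 0)
    (hcard : (Su ∪ Sv).card ≤ t) :
    |RCLike.re (⟪E u, E (Aᴴ *ᵥ (A *ᵥ v) - v)⟫_ℂ)| ≤ δ * l2norm u * l2norm v := by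
  by_cases hu0 : l2norm u = 0
  · have : E u = 0 := by
      rw [l2norm_eq] at hu0
      exact norm_eq_zero.mp hu0
    rw [this, inner_zero_left]
    simp only [map_zero, abs_zero, hu0]
    rw [mul_zero, zero_mul]
  by_cases hv0 : l2norm v = 0
  · have hv' : E v = 0 := by
      rw [l2norm_eq] at hv0
      exact norm_eq_zero.mp hv0
    have hvz : v = 0 := congrArg (fun (q : EuclideanSpace ℂ (Fin N)) => (q : Fin N → ℂ)) hv'
    rw [hvz]
    have hg : Aᴴ *ᵥ (A *ᵥ (0 : Fin N → ℂ)) - 0 = 0 := by simp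
    rw [hg, E_zero, inner_zero_right]
    simp only [map_zero, abs_zero]
    exact mul_nonneg (mul_nonneg hδ0 (l2_nonneg u)) (l2_nonneg 0)
  have ha : 0 < l2norm u := lt_of_le_of_ne (l2_nonneg u) (Ne.symm hu0)
  have hb : 0 < l2norm v := lt_of_le_of_ne (l2_nonneg v) (Ne.symm hv0)
  set a := l2norm u with hadef
  set b := l2norm v with hbdef
  set tR := Real.sqrt (b / a) with htRdef
  have htpos : 0 < tR := Real.sqrt_pos.mpr (div_pos hb ha)
  have htne : tR ≠ 0 := ne_of_gt htpos
  set uc : Fin N → ℂ := (tR : ℂ) • u with hucdef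
  set vc : Fin N → ℂ := ((tR)⁻¹ : ℝ) • v with hvcdef
  have huc : ∀ i ∉ Su, uc i = 0 := by
    intro i hi
    simp [hucdef, hu i hi]
  have hvc : ∀ i ∉ Sv, vc i = 0 := by
    intro i hi
    simp [hvcdef, hv i hi]
  have hgvc : Aᴴ *ᵥ (A *ᵥ vc) - vc = ((tR)⁻¹ : ℝ) • (Aᴴ *ᵥ (A *ᵥ v) - v) := by
    rw [hvcdef, Matrix.mulVec_smul, Matrix.mulVec_smul, smul_sub]
  have hkey := step3core A δ t hδ0 HH uc vc Su Sv huc hvc hcard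
  have e1 : l2norm uc = tR * a := by
    rw [l2norm_eq, hucdef, E_smul, norm_smul, Complex.norm_real,
      Real.norm_eq_abs, abs_of_pos htpos, ← l2norm_eq]
  have e2 : l2norm vc = tR⁻¹ * b := by
    rw [l2norm_eq, hvcdef]
    rw [show ((tR⁻¹ : ℝ) • v : Fin N → ℂ) = ((tR⁻¹ : ℝ) : ℂ) • v by
      funext i; simp [Complex.real_smul]]
    rw [E_smul, norm_smul, Complex.norm_real, Real.norm_eq_abs,
      abs_of_pos (inv_pos.mpr htpos), ← l2norm_eq]
  have e3 : RCLike.re (⟪E uc, E (Aᴴ *ᵥ (A *ᵥ vc) - vc)⟫_ℂ)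
      = RCLike.re (⟪E u, E (Aᴴ *ᵥ (A *ᵥ v) - v)⟫_ℂ) := by
    rw [hgvc, hucdef]
    rw [show (((tR)⁻¹ : ℝ) • (Aᴴ *ᵥ (A *ᵥ v) - v) : Fin N → ℂ)
        = ((tR⁻¹ : ℝ) : ℂ) • (Aᴴ *ᵥ (A *ᵥ v) - v) by
      funext i; simp [Complex.real_smul]]
    rw [E_smul, E_smul, inner_smul_left, inner_smul_right]
    rw [Complex.conj_ofReal]
    rw [← mul_assoc, show ((tR:ℂ) * ((tR⁻¹ : ℝ) : ℂ)) = 1 by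
      push_cast
      exact mul_inv_cancel₀ (by exact_mod_cast htne), one_mul]
  rw [e1, e2, e3] at hkey
  have hsq : tR ^ 2 = b / a := Real.sq_sqrt (le_of_lt (div_pos hb ha))
  have harith : δ * ((tR * a) ^ 2 + (tR⁻¹ * b) ^ 2) / 2 = δ * a * b := by
    rw [mul_pow, mul_pow, hsq, inv_pow, hsq, inv_div]
    field_simp
    ring
  rw [harith] at hkey
  exact hkey

lemma step4 (hδ0 : 0 ≤ δ)
    (HH : ∀ (w : Fin N → ℂ) (S : Finset (Fin N)), (∀ i ∉ S, w i = 0) → S.card ≤ t →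
      |l2norm (A *ᵥ w) ^ 2 - l2norm w ^ 2| ≤ δ * l2norm w ^ 2)
    (u v : Fin N → ℂ) (Su Sv : Finset (Fin N))
    (hu : ∀ i ∉ Su, u i = 0) (hv : ∀ i ∉ Sv, v i = 0)
    (hcard : (Su ∪ Sv).card ≤ t) :
    ‖⟪E u, E (Aᴴ *ᵥ (A *ᵥ v) - v)⟫_ℂ‖ ≤ δ * l2norm u * l2norm v := by
  set c := ⟪E u, E (Aᴴ *ᵥ (A *ᵥ v) - v)⟫_ℂ with hcdef
  by_cases hc : c = 0
  · rw [hc, norm_zero]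
    exact mul_nonneg (mul_nonneg hδ0 (l2_nonneg u)) (l2_nonneg v)
  have hcn : (0:ℝ) < ‖c‖ := norm_pos_iff.mpr hc
  set μ : ℂ := c / (‖c‖ : ℂ) with hμdef
  have hμnorm : ‖μ‖ = 1 := by
    rw [hμdef, norm_div, Complex.norm_real, Real.norm_eq_abs, abs_of_pos hcn,
      div_self (ne_of_gt hcn)]
  set uc : Fin N → ℂ := μ • u with hucdef
  have huc : ∀ i ∉ Su, uc i = 0 := by
    intro i hi; simp [hucdef, hu i hi]
  have e1 : l2norm uc = l2norm u := by
    rw [l2norm_eq, hucdef, E_smul, norm_smul, hμnorm, one_mul, ← l2norm_eq]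
  have e2 : ⟪E uc, E (Aᴴ *ᵥ (A *ᵥ v) - v)⟫_ℂ = (‖c‖ : ℂ) := by
    rw [hucdef, E_smul, inner_smul_left, ← hcdef, hμdef, map_div₀, Complex.conj_ofReal]
    rw [div_mul_eq_mul_div, RCLike.conj_mul]
    rw [sq, mul_div_assoc]
    have habs : ((‖c‖ : ℝ) : ℂ) ≠ 0 := by
      exact_mod_cast hcn.ne'
    simp [div_self habs]
  have hkey := step3 A δ t hδ0 HH uc v Su Sv huc hv hcard
  rw [e2, e1] at hkey
  have : RCLike.re ((‖c‖ : ℂ)) = ‖c‖ := by simp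
  rw [this] at hkey
  calc ‖c‖ = |‖c‖| := (abs_of_pos hcn).symm
    _ ≤ δ * l2norm u * l2norm v := hkey

lemma res_g_bound (hδ0 : 0 ≤ δ)
    (HH : ∀ (w : Fin N → ℂ) (S : Finset (Fin N)), (∀ i ∉ S, w i = 0) → S.card ≤ t →
      |l2norm (A *ᵥ w) ^ 2 - l2norm w ^ 2| ≤ δ * l2norm w ^ 2)
    (v : Fin N → ℂ) (Sv T : Finset (Fin N))
    (hv : ∀ i ∉ Sv, v i = 0) (hcard : (T ∪ Sv).card ≤ t) :
    l2norm (res T (Aᴴ *ᵥ (A *ᵥ v) - v)) ≤ δ * l2norm v := by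
  set u := res T (Aᴴ *ᵥ (A *ᵥ v) - v) with hudef
  have hu : ∀ i ∉ T, u i = 0 := fun i hi => res_zero_off T _ i hi
  have h1 : l2norm u ^ 2 = RCLike.re (⟪E u, E (Aᴴ *ᵥ (A *ᵥ v) - v)⟫_ℂ) := by
    rw [hudef, inner_res_self]
    exact (Complex.ofReal_re _).symm
  have h2 := step4 A δ t hδ0 HH u v T Sv hu hv hcard
  have h3 : l2norm u ^ 2 ≤ δ * l2norm u * l2norm v := by
    rw [h1]
    exact (RCLike.re_le_norm _).trans h2
  by_cases h0 : l2norm u = 0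
  · rw [h0]
    exact mul_nonneg hδ0 (l2_nonneg v)
  have hpos : 0 < l2norm u := lt_of_le_of_ne (l2_nonneg u) (Ne.symm h0)
  nlinarith [h3, hpos]

lemma res_adj_bound (K : ℝ) (hK : 0 ≤ K)
    (hup : ∀ (w : Fin N → ℂ) (S : Finset (Fin N)), (∀ i ∉ S, w i = 0) → S.card ≤ t →
      l2norm (A *ᵥ w) ≤ K * l2norm w)
    (e : Fin m → ℂ) (T : Finset (Fin N)) (hcard : T.card ≤ t) :
    l2norm (res T (Aᴴ *ᵥ e)) ≤ K * l2norm e := by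
  set u := res T (Aᴴ *ᵥ e) with hudef
  have hu : ∀ i ∉ T, u i = 0 := fun i hi => res_zero_off T _ i hi
  have h1 : l2norm u ^ 2 = RCLike.re (⟪E u, E (Aᴴ *ᵥ e)⟫_ℂ) := by
    rw [hudef, inner_res_self]
    exact (Complex.ofReal_re _).symm
  have h2 : ⟪E u, E (Aᴴ *ᵥ e)⟫_ℂ = ⟪E (A *ᵥ u), E e⟫_ℂ := (inner_mulVec A u e).symm
  have h3 : l2norm u ^ 2 ≤ l2norm (A *ᵥ u) * l2norm e := by
    rw [h1, h2]
    calc RCLike.re (⟪E (A *ᵥ u), E e⟫_ℂ) ≤ ‖⟪E (A *ᵥ u), E e⟫_ℂ‖ := RCLike.re_le_norm _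
      _ ≤ ‖E (A *ᵥ u)‖ * ‖E e‖ := norm_inner_le_norm _ _
      _ = l2norm (A *ᵥ u) * l2norm e := by rw [← l2norm_eq, ← l2norm_eq]
  have h4 : l2norm (A *ᵥ u) ≤ K * l2norm u := hup u T hu hcard
  have h5 : l2norm u ^ 2 ≤ K * l2norm u * l2norm e := by
    calc l2norm u ^ 2 ≤ l2norm (A *ᵥ u) * l2norm e := h3
      _ ≤ K * l2norm u * l2norm e :=
        mul_le_mul_of_nonneg_right h4 (l2_nonneg e)
  by_cases h0 : l2norm u = 0
  · rw [h0]
    exact mul_nonneg hK (l2_nonneg e)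
  have hpos : 0 < l2norm u := lt_of_le_of_ne (l2_nonneg u) (Ne.symm h0)
  nlinarith [h5, hpos]

end RIPlem

lemma res_disjoint_add {N : ℕ} (S T : Finset (Fin N)) (h : Disjoint S T) (x : Fin N → ℂ) :
    res (S ∪ T) x = res S x + res T x := by
  funext i
  by_cases hS : i ∈ S
  · have hT : i ∉ T := Finset.disjoint_left.mp h hS
    simp [res, hS, hT]
  · by_cases hT : i ∈ T
    · simp [res, hS, hT]
    · simp [res, hS, hT]

lemma l2norm_zero' {n : ℕ} : l2norm (0 : Fin n → ℂ) = 0 := by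
  rw [l2norm_eq, E_zero, norm_zero]

lemma block_bound {m N : ℕ} (A : Matrix (Fin m) (Fin N) ℂ) (K : ℝ) (s : ℕ)
    (hs : 1 ≤ s) (hK : 0 ≤ K)
    (hup : ∀ (u : Fin N → ℂ) (S : Finset (Fin N)), (∀ i ∉ S, u i = 0) → S.card ≤ s →
      l2norm (A *ᵥ u) ≤ K * l2norm u)
    (x : Fin N → ℂ) :
    ∀ (R : Finset (Fin N)) (β : ℝ), 0 ≤ β → (∀ i ∈ R, (s : ℝ) * ‖x i‖ ≤ β) →
      l2norm (A *ᵥ res R x) ≤ K * (β + ∑ i ∈ R, ‖x i‖) / Real.sqrt s := by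
  intro R
  induction R using Finset.strongInductionOn with
  | _ R ih =>
    intro β hβ hsmall
    have hsqs : (0:ℝ) < Real.sqrt s := Real.sqrt_pos.mpr (by exact_mod_cast hs)
    have hsumnn : (0:ℝ) ≤ ∑ i ∈ R, ‖x i‖ := Finset.sum_nonneg fun i _ => norm_nonneg _
    by_cases hR : R = ∅
    · subst hR
      have h0 : res (∅ : Finset (Fin N)) x = 0 := by funext i; simp [res]
      rw [h0, Matrix.mulVec_zero, l2norm_zero']
      positivity
    · have hRne : R.Nonempty := Finset.nonempty_iff_ne_empty.mpr hR
      obtain ⟨T, -, hTR, hTcard, hTdom⟩ := exists_dom_superset (fun i => ‖x i‖) R ∅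
        (Finset.empty_subset R) (by intro i hi; exact absurd hi (Finset.notMem_empty i)) s
      rw [Finset.card_empty, Nat.zero_add] at hTcard
      have hRpos := Finset.card_pos.mpr hRne
      have hTne : T.Nonempty := by
        rw [← Finset.card_pos, hTcard]
        omega
      have hsub : R \ T ⊂ R := Finset.sdiff_ssubset hTR hTne
      have hdec : res R x = res T x + res (R \ T) x := by
        rw [← res_disjoint_add T (R \ T) Finset.disjoint_sdiff x,
          Finset.union_sdiff_of_subset hTR]
      have hspos : (0:ℝ) < s := by exact_mod_cast hs
      have hT1 : l2norm (res T x) ≤ β / Real.sqrt s := by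
        have hsq : l2norm (res T x) ^ 2 ≤ β ^ 2 / s := by
          rw [l2_sq_res]
          have hbound : ∀ i ∈ T, ‖x i‖ ^ 2 ≤ (β / s) ^ 2 := by
            intro i hi
            have h1 := hsmall i (hTR hi)
            have h2 : ‖x i‖ ≤ β / s := by
              rw [le_div_iff₀ hspos]; linarith
            exact pow_le_pow_left₀ (norm_nonneg _) h2 2
          calc ∑ i ∈ T, ‖x i‖ ^ 2 ≤ ∑ _i ∈ T, (β / s) ^ 2 := Finset.sum_le_sum hbound
            _ = T.card * (β / s) ^ 2 := by rw [Finset.sum_const, nsmul_eq_mul]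
            _ ≤ s * (β / s) ^ 2 := by
                have hc : (T.card : ℝ) ≤ s := by
                  have : T.card ≤ s := by omega
                  exact_mod_cast this
                exact mul_le_mul_of_nonneg_right hc (by positivity)
            _ = β ^ 2 / s := by field_simp
        calc l2norm (res T x) = Real.sqrt (l2norm (res T x) ^ 2) :=
              (Real.sqrt_sq (l2_nonneg _)).symm
          _ ≤ Real.sqrt (β ^ 2 / s) := Real.sqrt_le_sqrt hsq
          _ = β / Real.sqrt s := by
              rw [Real.sqrt_div (sq_nonneg β), Real.sqrt_sq hβ]
      have hT2 : l2norm (A *ᵥ res T x) ≤ K * (β / Real.sqrt s) := by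
        have := hup (res T x) T (fun i hi => res_zero_off T x i hi) (by omega)
        exact this.trans (mul_le_mul_of_nonneg_left hT1 hK)
      have hrest : ∀ i ∈ R \ T, (s : ℝ) * ‖x i‖ ≤ ∑ j ∈ T, ‖x j‖ := by
        intro i hi
        by_cases hc : R.card < s
        · exfalso
          have hTeq : T = R := Finset.eq_of_subset_of_card_le hTR (by omega)
          rw [hTeq, Finset.sdiff_self] at hi
          exact absurd hi (Finset.notMem_empty i)
        · have hTs : T.card = s := by omega
          have hle : ∀ j ∈ T, ‖x i‖ ≤ ‖x j‖ := fun j hj =>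
            hTdom j hj i (Finset.mem_sdiff.mp hi).1 (Finset.mem_sdiff.mp hi).2
          calc (s : ℝ) * ‖x i‖ = ∑ _j ∈ T, ‖x i‖ := by
                rw [Finset.sum_const, nsmul_eq_mul, hTs]
            _ ≤ ∑ j ∈ T, ‖x j‖ := Finset.sum_le_sum fun j hj => hle j hj
      have hIH := ih (R \ T) hsub (∑ j ∈ T, ‖x j‖)
        (Finset.sum_nonneg fun j _ => norm_nonneg _) hrest
      have hsum : (∑ i ∈ R \ T, ‖x i‖) + ∑ j ∈ T, ‖x j‖ = ∑ i ∈ R, ‖x i‖ :=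
        Finset.sum_sdiff hTR
      calc l2norm (A *ᵥ res R x) = l2norm (A *ᵥ res T x + A *ᵥ res (R \ T) x) := by
            rw [hdec, Matrix.mulVec_add]
        _ ≤ l2norm (A *ᵥ res T x) + l2norm (A *ᵥ res (R \ T) x) := l2_triangle _ _
        _ ≤ K * (β / Real.sqrt s)
            + K * ((∑ j ∈ T, ‖x j‖) + ∑ i ∈ R \ T, ‖x i‖) / Real.sqrt s := by
            linarith [hT2, hIH]
        _ = K * (β + ((∑ i ∈ R \ T, ‖x i‖) + ∑ j ∈ T, ‖x j‖)) / Real.sqrt s := by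
            field_simp; ring
        _ = K * (β + ∑ i ∈ R, ‖x i‖) / Real.sqrt s := by rw [hsum]

lemma l2norm_neg' {n : ℕ} (x : Fin n → ℂ) : l2norm (-x) = l2norm x := by
  have : E (-x) = -(E x) := rfl
  rw [l2norm_eq, this, norm_neg, ← l2norm_eq]

lemma sqrt_sq_le {a b : ℝ} (hb : 0 ≤ b) (h : a ^ 2 ≤ b ^ 2) (ha : 0 ≤ a) : a ≤ b := by
  nlinarith

set_option maxHeartbeats 1000000 in
lemma threshold_step {N : ℕ} (xbar u z : Fin N → ℂ) (S₂ S' : Finset (Fin N))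
    (hxbar : ∀ i ∉ S₂, xbar i = 0)
    (hz1 : ∀ i ∈ S', z i = u i) (hz2 : ∀ i ∉ S', z i = 0)
    (hcmp : ∑ i ∈ S₂, ‖u i‖ ^ 2 ≤ ∑ i ∈ S', ‖u i‖ ^ 2) :
    l2norm (xbar - z) ≤ Real.sqrt 3 * l2norm (res (S₂ ∪ S') (u - xbar)) := by
  classical
  set b2 := ∑ i ∈ S' \ S₂, ‖(u - xbar) i‖ ^ 2 with hb2def
  set c2 := ∑ i ∈ S₂ \ S', ‖(u - xbar) i‖ ^ 2 with hc2def
  set d2 := ∑ i ∈ S₂ ∩ S', ‖(u - xbar) i‖ ^ 2 with hd2def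
  set c2' := ∑ i ∈ S₂ \ S', ‖u i‖ ^ 2 with hc2'def
  have hb2nn : 0 ≤ b2 := Finset.sum_nonneg fun i _ => by positivity
  have hc2nn : 0 ≤ c2 := Finset.sum_nonneg fun i _ => by positivity
  have hd2nn : 0 ≤ d2 := Finset.sum_nonneg fun i _ => by positivity
  have hc2'nn : 0 ≤ c2' := Finset.sum_nonneg fun i _ => by positivity
  -- on S' \ S₂ xbar vanishes
  have hb2' : ∑ i ∈ S' \ S₂, ‖u i‖ ^ 2 = b2 := by
    apply Finset.sum_congr rfl
    intro i hi
    have h0 := hxbar i (Finset.mem_sdiff.mp hi).2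
    simp [Pi.sub_apply, h0]
  have hcmp' : c2' ≤ b2 := by
    have e1 := Finset.sum_inter_add_sum_sdiff S₂ S' (fun i => ‖u i‖ ^ 2)
    have e2 := Finset.sum_inter_add_sum_sdiff S' S₂ (fun i => ‖u i‖ ^ 2)
    rw [Finset.inter_comm] at e2
    rw [hb2'] at e2
    rw [← hc2'def] at e1
    linarith
  -- Q² = d2 + c2 + b2
  have hQ : l2norm (res (S₂ ∪ S') (u - xbar)) ^ 2 = d2 + c2 + b2 := by
    rw [l2_sq_res]
    rw [show S₂ ∪ S' = S₂ ∪ (S' \ S₂) by rw [Finset.union_sdiff_self_eq_union]]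
    rw [Finset.sum_union Finset.disjoint_sdiff]
    have := Finset.sum_inter_add_sum_sdiff S₂ S' (fun i => ‖(u - xbar) i‖ ^ 2)
    rw [← this]
  set Q := l2norm (res (S₂ ∪ S') (u - xbar)) with hQdef
  have hQnn : 0 ≤ Q := l2_nonneg _
  -- split of ‖xbar - z‖²
  have hsupp : ∀ i ∈ Finset.univ, i ∉ S₂ ∪ S' → ‖(xbar - z) i‖ ^ 2 = 0 := by
    intro i _ hi
    rw [Finset.mem_union] at hi
    push_neg at hi
    have h1 := hxbar i hi.1
    have h2 := hz2 i hi.2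
    simp [Pi.sub_apply, h1, h2]
  have hsplit : l2norm (xbar - z) ^ 2
      = d2 + (∑ i ∈ S₂ \ S', ‖xbar i‖ ^ 2) + b2 := by
    rw [l2_sq]
    rw [← Finset.sum_subset (Finset.subset_univ (S₂ ∪ S')) hsupp]
    rw [show S₂ ∪ S' = S₂ ∪ (S' \ S₂) by rw [Finset.union_sdiff_self_eq_union]]
    rw [Finset.sum_union Finset.disjoint_sdiff]
    have e1 := Finset.sum_inter_add_sum_sdiff S₂ S' (fun i => ‖(xbar - z) i‖ ^ 2)
    have p1 : ∑ i ∈ S₂ ∩ S', ‖(xbar - z) i‖ ^ 2 = d2 := by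
      apply Finset.sum_congr rfl
      intro i hi
      rw [show (xbar - z) i = xbar i - u i by
        rw [Pi.sub_apply, hz1 i (Finset.mem_inter.mp hi).2],
        show (u - xbar) i = u i - xbar i from rfl, norm_sub_rev]
    have p2 : ∑ i ∈ S₂ \ S', ‖(xbar - z) i‖ ^ 2 = ∑ i ∈ S₂ \ S', ‖xbar i‖ ^ 2 := by
      apply Finset.sum_congr rfl
      intro i hi
      rw [show (xbar - z) i = xbar i by
        rw [Pi.sub_apply, hz2 i (Finset.mem_sdiff.mp hi).2, sub_zero]]
    have p3 : ∑ i ∈ S' \ S₂, ‖(xbar - z) i‖ ^ 2 = b2 := by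
      apply Finset.sum_congr rfl
      intro i hi
      rw [show (xbar - z) i = -(u i) by
        rw [Pi.sub_apply, hz1 i (Finset.mem_sdiff.mp hi).1,
          hxbar i (Finset.mem_sdiff.mp hi).2, zero_sub],
        show (u - xbar) i = u i - xbar i from rfl,
        hxbar i (Finset.mem_sdiff.mp hi).2, sub_zero, norm_neg]
    rw [← e1, p1, p2, p3]
  -- bound middle piece
  have hmid : ∑ i ∈ S₂ \ S', ‖xbar i‖ ^ 2 ≤ (Real.sqrt c2 + Real.sqrt c2') ^ 2 := by
    have hdecomp : res (S₂ \ S') xbar = res (S₂ \ S') (xbar - u) + res (S₂ \ S') u := by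
      rw [← res_add]
      congr 1
      funext i
      simp
    have h1sq : l2norm (res (S₂ \ S') (xbar - u)) ^ 2 = c2 := by
      rw [l2_sq_res, hc2def]
      apply Finset.sum_congr rfl
      intro i _
      rw [show (xbar - u) i = xbar i - u i from rfl,
        show (u - xbar) i = u i - xbar i from rfl, norm_sub_rev]
    have h1 : l2norm (res (S₂ \ S') (xbar - u)) = Real.sqrt c2 := by
      rw [← h1sq, Real.sqrt_sq (l2_nonneg _)]
    have h2sq : l2norm (res (S₂ \ S') u) ^ 2 = c2' := l2_sq_res _ _
    have h2 : l2norm (res (S₂ \ S') u) = Real.sqrt c2' := by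
      rw [← h2sq, Real.sqrt_sq (l2_nonneg _)]
    have h3 : ∑ i ∈ S₂ \ S', ‖xbar i‖ ^ 2 = l2norm (res (S₂ \ S') xbar) ^ 2 :=
      (l2_sq_res _ _).symm
    rw [h3, hdecomp]
    have h4 := l2_triangle (res (S₂ \ S') (xbar - u)) (res (S₂ \ S') u)
    rw [h1, h2] at h4
    exact pow_le_pow_left₀ (l2_nonneg _) h4 2
  have hsq : l2norm (xbar - z) ^ 2 ≤ 3 * Q ^ 2 := by
    have e1 : Real.sqrt c2 ^ 2 = c2 := Real.sq_sqrt hc2nn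
    have e2 : Real.sqrt c2' ^ 2 = c2' := Real.sq_sqrt hc2'nn
    have e3 : Real.sqrt b2 ^ 2 = b2 := Real.sq_sqrt hb2nn
    have h6 : Real.sqrt c2' ≤ Real.sqrt b2 := Real.sqrt_le_sqrt hcmp'
    have h7 : (Real.sqrt c2 + Real.sqrt c2') ^ 2 ≤ 2 * c2 + 2 * b2 := by
      nlinarith [Real.sqrt_nonneg c2, Real.sqrt_nonneg c2', Real.sqrt_nonneg b2,
        sq_nonneg (Real.sqrt c2 - Real.sqrt b2)]
    rw [hsplit, hQ]
    linarith [hmid, h7, hd2nn, hc2nn, hb2nn]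
  calc l2norm (xbar - z) = Real.sqrt (l2norm (xbar - z) ^ 2) :=
        (Real.sqrt_sq (l2_nonneg _)).symm
    _ ≤ Real.sqrt (3 * Q ^ 2) := Real.sqrt_le_sqrt hsq
    _ = Real.sqrt 3 * Q := by
        rw [Real.sqrt_mul (by norm_num), Real.sqrt_sq hQnn]

noncomputable def Dcon (δ : ℝ) : ℝ :=
  Real.sqrt 3 * Real.sqrt (1 + δ) / (1 - Real.sqrt 3 * δ)

noncomputable def Ccon (δ : ℝ) : ℝ := 1 + 2 * Real.sqrt (1 + δ) * Dcon δ



/-- Error bound in the ℓ² norm for Iterative Hard Thresholding under the RIP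
condition `δ_{6s} < 1/√3`. -/
theorem iht_error_l2 :
    ∃ C D : ℝ → ℝ,
      (∀ δ : ℝ, 0 ≤ δ → δ < 1 / Real.sqrt 3 → 0 < C δ ∧ 0 < D δ) ∧
      ∀ (m N s : ℕ) (A : Matrix (Fin m) (Fin N) ℂ), 1 ≤ s →
        RIC A (6 * s) < 1 / Real.sqrt 3 →
        ∀ (x : Fin N → ℂ) (e : Fin m → ℂ) (xs : ℕ → Fin N → ℂ),
          xs 0 = 0 →
          (∀ n : ℕ, IsHT (2 * s) (xs n + Aᴴ *ᵥ (A *ᵥ x + e - A *ᵥ xs n)) (xs (n + 1))) →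
          Real.sqrt 3 * RIC A (6 * s) < 1 ∧
          ∀ n : ℕ, l2norm (x - xs n) ≤
            C (RIC A (6 * s)) / Real.sqrt s * sigmaL1 s x
            + D (RIC A (6 * s)) * l2norm e
            + (Real.sqrt 3 * RIC A (6 * s)) ^ n * l2norm x := by
  classical
  have h3 : (0:ℝ) < Real.sqrt 3 := by positivity
  refine ⟨Ccon, Dcon, ?_, ?_⟩
  · intro δ h0 hlt
    have hden : 0 < 1 - Real.sqrt 3 * δ := by
      rw [lt_div_iff₀ h3] at hlt
      nlinarith
    have hs1 : 0 < Real.sqrt (1 + δ) := Real.sqrt_pos.mpr (by linarith)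
    have hD : 0 < Dcon δ := by
      apply div_pos _ hden
      positivity
    refine ⟨?_, hD⟩
    rw [Ccon]
    nlinarith [mul_nonneg hs1.le hD.le]
  intro m N s A hs hRIC x e xs hxs0 hHT
  set δ := RIC A (6 * s) with hδdef
  have hmem := RIC_mem A (6 * s)
  have hδ0 : 0 ≤ δ := hmem.1
  have hρ : Real.sqrt 3 * δ < 1 := by
    rw [lt_div_iff₀ h3] at hRIC
    nlinarith
  refine ⟨hρ, ?_⟩
  have hρ0 : 0 ≤ Real.sqrt 3 * δ := mul_nonneg h3.le hδ0
  have hsq1δ : (0:ℝ) < Real.sqrt (1 + δ) := Real.sqrt_pos.mpr (by linarith)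
  have hsqs : (0:ℝ) < Real.sqrt s := Real.sqrt_pos.mpr (by exact_mod_cast hs)
  have HH : ∀ (w : Fin N → ℂ) (S : Finset (Fin N)), (∀ i ∉ S, w i = 0) → S.card ≤ 6 * s →
      |l2norm (A *ᵥ w) ^ 2 - l2norm w ^ 2| ≤ δ * l2norm w ^ 2 := by
    intro w S h0 hc
    obtain ⟨hlo, hhi⟩ := hmem.2 w (isSparse_of w S h0 _ hc)
    rw [abs_le]
    constructor <;> nlinarith
  have hup6 : ∀ (w : Fin N → ℂ) (S : Finset (Fin N)), (∀ i ∉ S, w i = 0) → S.card ≤ 6 * s →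
      l2norm (A *ᵥ w) ≤ Real.sqrt (1 + δ) * l2norm w := by
    intro w S h0 hc
    have hhi := (hmem.2 w (isSparse_of w S h0 _ hc)).2
    calc l2norm (A *ᵥ w) = Real.sqrt (l2norm (A *ᵥ w) ^ 2) :=
          (Real.sqrt_sq (l2_nonneg _)).symm
      _ ≤ Real.sqrt ((1 + δ) * l2norm w ^ 2) := Real.sqrt_le_sqrt hhi
      _ = Real.sqrt (1 + δ) * l2norm w := by
          rw [Real.sqrt_mul (by linarith), Real.sqrt_sq (l2_nonneg w)]
  have hup_s : ∀ (w : Fin N → ℂ) (S : Finset (Fin N)), (∀ i ∉ S, w i = 0) → S.card ≤ s →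
      l2norm (A *ᵥ w) ≤ Real.sqrt (1 + δ) * l2norm w :=
    fun w S h0 hc => hup6 w S h0 (by omega)
  have hNcard : (Finset.univ : Finset (Fin N)).card = N := by simp
  obtain ⟨S₁, -, -, hS1card, hS1dom⟩ := exists_dom_superset (fun i => ‖x i‖) Finset.univ ∅
    (Finset.empty_subset _) (fun i hi => absurd hi (Finset.notMem_empty i)) s
  rw [Finset.card_empty, Nat.zero_add, hNcard] at hS1card
  obtain ⟨S₂, hS12, -, hS2card, hS2dom⟩ := exists_dom_superset (fun i => ‖x i‖) Finset.univ S₁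
    (Finset.subset_univ _) hS1dom s
  rw [hS1card, hNcard] at hS2card
  have hS1dom' : ∀ i ∈ S₁, ∀ j ∉ S₁, ‖x j‖ ≤ ‖x i‖ :=
    fun i hi j hj => hS1dom i hi j (Finset.mem_univ j) hj
  have hS2dom' : ∀ i ∈ S₂, ∀ j ∉ S₂, ‖x j‖ ≤ ‖x i‖ :=
    fun i hi j hj => hS2dom i hi j (Finset.mem_univ j) hj
  have hS2le : S₂.card ≤ 2 * s := by omega
  set xbar := res S₂ x with hxbardef
  have hxbar0 : ∀ i ∉ S₂, xbar i = 0 := fun i hi => res_zero_off _ _ i hi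
  set σ := sigmaL1 s x with hσdef
  have hσ1 : ∑ i ∈ S₁ᶜ, ‖x i‖ ≤ σ := by
    rw [hσdef, sigmaL1]
    apply le_csInf
    · exact ⟨l1norm (x - 0), 0, by simp [IsSparse], rfl⟩
    rintro τ ⟨z, hz, rfl⟩
    set Z := Finset.univ.filter (fun i => z i ≠ 0) with hZdef
    have hZco : (↑Z : Set (Fin N)) = Function.support z := by
      ext i; simp [hZdef, Function.mem_support]
    have hZcard : Z.card ≤ s := by
      have h := hz
      rw [IsSparse, ← hZco, Set.ncard_coe_finset] at h
      exact h
    have hZN : Z.card ≤ N := by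
      have h := Finset.card_le_univ Z
      simpa using h
    have hG : ∑ i ∈ Z, ‖x i‖ ≤ ∑ i ∈ S₁, ‖x i‖ :=
      sum_le_sum_of_dom (fun i => ‖x i‖) (fun i => norm_nonneg _) S₁ Z (by omega) hS1dom'
    have h1 := Finset.sum_add_sum_compl S₁ (fun i => ‖x i‖)
    have h2 := Finset.sum_add_sum_compl Z (fun i => ‖x i‖)
    have hcompl : ∑ i ∈ S₁ᶜ, ‖x i‖ ≤ ∑ i ∈ Zᶜ, ‖x i‖ := by linarith
    calc ∑ i ∈ S₁ᶜ, ‖x i‖ ≤ ∑ i ∈ Zᶜ, ‖x i‖ := hcompl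
      _ = ∑ i ∈ Zᶜ, ‖(x - z) i‖ := by
          apply Finset.sum_congr rfl
          intro i hi
          have hzi : z i = 0 := by
            have hmemc := Finset.mem_compl.mp hi
            by_contra hne
            exact hmemc (by simp [hZdef, hne])
          rw [show (x - z) i = x i - z i from rfl, hzi, sub_zero]
      _ ≤ ∑ i, ‖(x - z) i‖ := Finset.sum_le_sum_of_subset_of_nonneg
          (Finset.subset_univ _) (fun i _ _ => norm_nonneg _)
      _ = l1norm (x - z) := rfl
  have hσ0 : 0 ≤ σ := le_trans (Finset.sum_nonneg fun i _ => norm_nonneg _) hσ1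
  have hσmid : ∑ i ∈ S₂ \ S₁, ‖x i‖ ≤ σ := by
    refine le_trans (Finset.sum_le_sum_of_subset_of_nonneg ?_ fun i _ _ => norm_nonneg _) hσ1
    intro i hi
    rw [Finset.mem_compl]
    exact (Finset.mem_sdiff.mp hi).2
  have hσtail2 : ∑ i ∈ S₂ᶜ, ‖x i‖ ≤ σ := by
    refine le_trans (Finset.sum_le_sum_of_subset_of_nonneg ?_ fun i _ _ => norm_nonneg _) hσ1
    intro i hi
    rw [Finset.mem_compl] at hi ⊢
    exact fun h => hi (hS12 h)
  have hxsub : x - xbar = res S₂ᶜ x := by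
    funext i
    by_cases h : i ∈ S₂
    · simp [hxbardef, res, h]
    · simp [hxbardef, res, h]
  have ht23 : l2norm (x - xbar) ≤ σ / Real.sqrt s ∧
      l2norm (A *ᵥ (x - xbar)) ≤ 2 * Real.sqrt (1 + δ) * σ / Real.sqrt s := by
    by_cases hN : N < 2 * s
    · have hc : S₂.card = N := by omega
      have hS2univ : S₂ = Finset.univ := by
        apply Finset.eq_univ_of_card
        rw [hc, Fintype.card_fin]
      have hzero : x - xbar = 0 := by
        rw [hxsub, hS2univ]
        funext i
        simp [res]
      rw [hzero, Matrix.mulVec_zero]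
      simp only [l2norm_zero']
      constructor
      · exact div_nonneg hσ0 hsqs.le
      · exact div_nonneg (mul_nonneg (by positivity) hσ0) hsqs.le
    · push_neg at hN
      have hcardm : (S₂ \ S₁).card = s := by
        rw [Finset.card_sdiff_of_subset hS12]
        omega
      have hsmall : ∀ i ∈ S₂ᶜ, (s : ℝ) * ‖x i‖ ≤ ∑ j ∈ S₂ \ S₁, ‖x j‖ := by
        intro i hi
        have hi' : i ∉ S₂ := Finset.mem_compl.mp hi
        calc (s : ℝ) * ‖x i‖ = ∑ _j ∈ S₂ \ S₁, ‖x i‖ := by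
              rw [Finset.sum_const, nsmul_eq_mul, hcardm]
          _ ≤ ∑ j ∈ S₂ \ S₁, ‖x j‖ := Finset.sum_le_sum fun j hj =>
              hS2dom' j (Finset.mem_sdiff.mp hj).1 i hi'
      have hβ0 : (0:ℝ) ≤ ∑ j ∈ S₂ \ S₁, ‖x j‖ :=
        Finset.sum_nonneg fun j _ => norm_nonneg _
      have hspos : (0:ℝ) < s := by exact_mod_cast hs
      constructor
      · have hsq : l2norm (x - xbar) ^ 2 ≤ σ ^ 2 / s := by
          rw [hxsub, l2_sq_res]
          have hterm : ∀ i ∈ S₂ᶜ, ‖x i‖ ^ 2 ≤ (σ / s) * ‖x i‖ := by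
            intro i hi
            have h1 := hsmall i hi
            have h2 : ‖x i‖ ≤ σ / s := by
              rw [le_div_iff₀ hspos]
              calc ‖x i‖ * s = s * ‖x i‖ := by ring
                _ ≤ ∑ j ∈ S₂ \ S₁, ‖x j‖ := h1
                _ ≤ σ := hσmid
            calc ‖x i‖ ^ 2 = ‖x i‖ * ‖x i‖ := pow_two _
              _ ≤ (σ / s) * ‖x i‖ := mul_le_mul_of_nonneg_right h2 (norm_nonneg _)
          calc ∑ i ∈ S₂ᶜ, ‖x i‖ ^ 2 ≤ ∑ i ∈ S₂ᶜ, (σ / s) * ‖x i‖ :=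
                Finset.sum_le_sum hterm
            _ = (σ / s) * ∑ i ∈ S₂ᶜ, ‖x i‖ := by rw [Finset.mul_sum]
            _ ≤ (σ / s) * σ := mul_le_mul_of_nonneg_left hσtail2 (by positivity)
            _ = σ ^ 2 / s := by ring
        calc l2norm (x - xbar) = Real.sqrt (l2norm (x - xbar) ^ 2) :=
              (Real.sqrt_sq (l2_nonneg _)).symm
          _ ≤ Real.sqrt (σ ^ 2 / s) := Real.sqrt_le_sqrt hsq
          _ = σ / Real.sqrt s := by rw [Real.sqrt_div (sq_nonneg σ), Real.sqrt_sq hσ0]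
      · rw [hxsub]
        have hbb := block_bound A (Real.sqrt (1 + δ)) s hs (Real.sqrt_nonneg _) hup_s x
          S₂ᶜ (∑ j ∈ S₂ \ S₁, ‖x j‖) hβ0 hsmall
        calc l2norm (A *ᵥ res S₂ᶜ x)
            ≤ Real.sqrt (1 + δ) * ((∑ j ∈ S₂ \ S₁, ‖x j‖) + ∑ i ∈ S₂ᶜ, ‖x i‖)
              / Real.sqrt s := hbb
          _ ≤ Real.sqrt (1 + δ) * (σ + σ) / Real.sqrt s := by
              gcongr
          _ = 2 * Real.sqrt (1 + δ) * σ / Real.sqrt s := by ring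
  obtain ⟨ht2, ht3⟩ := ht23
  have hxbarle : l2norm xbar ≤ l2norm x := by
    have h1 : l2norm xbar ^ 2 ≤ l2norm x ^ 2 := by
      rw [hxbardef, l2_sq_res, l2_sq]
      exact Finset.sum_le_sum_of_subset_of_nonneg (Finset.subset_univ _)
        (fun i _ _ => by positivity)
    calc l2norm xbar = Real.sqrt (l2norm xbar ^ 2) := (Real.sqrt_sq (l2_nonneg _)).symm
      _ ≤ Real.sqrt (l2norm x ^ 2) := Real.sqrt_le_sqrt h1
      _ = l2norm x := Real.sqrt_sq (l2_nonneg _)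
  set e' := A *ᵥ (x - xbar) + e with he'def
  have he'bound : l2norm e' ≤ 2 * Real.sqrt (1 + δ) * σ / Real.sqrt s + l2norm e := by
    calc l2norm e' ≤ l2norm (A *ᵥ (x - xbar)) + l2norm e := l2_triangle _ _
      _ ≤ _ := by linarith
  have he'0 : 0 ≤ l2norm e' := l2_nonneg _
  have hden : 0 < 1 - Real.sqrt 3 * δ := by linarith
  set K := Dcon δ with hKdef
  have hK0 : 0 ≤ K := by
    rw [hKdef, Dcon]
    exact div_nonneg (by positivity) hden.le
  have hKrec : Real.sqrt 3 * δ * K + Real.sqrt 3 * Real.sqrt (1 + δ) = K := by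
    rw [hKdef, Dcon]
    field_simp
    ring
  have hxs_supp : ∀ n, ∃ Sn : Finset (Fin N), Sn.card ≤ 2 * s ∧ ∀ i ∉ Sn, xs n i = 0 := by
    intro n
    cases n with
    | zero => exact ⟨∅, by simp, fun i _ => by rw [hxs0]; rfl⟩
    | succ n =>
      obtain ⟨S', hc, h1, h2, h3'⟩ := hHT n
      exact ⟨S', by omega, h2⟩
  have main : ∀ n, l2norm (xbar - xs n)
      ≤ (Real.sqrt 3 * δ) ^ n * l2norm xbar + K * l2norm e' := by
    intro n
    induction n with
    | zero =>
      rw [hxs0, sub_zero, pow_zero, one_mul]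
      nlinarith [mul_nonneg hK0 he'0]
    | succ n ihn =>
      obtain ⟨S', hS'card, hz1, hz2, hz3⟩ := hHT n
      obtain ⟨Sn, hSncard, hSn0⟩ := hxs_supp n
      set u := xs n + Aᴴ *ᵥ (A *ᵥ x + e - A *ᵥ xs n) with hudef
      set w := xs n - xbar with hwdef
      have hS'le : S'.card ≤ 2 * s := by omega
      have hwsupp : ∀ i ∉ Sn ∪ S₂, w i = 0 := by
        intro i hi
        rw [Finset.mem_union] at hi
        push_neg at hi
        rw [hwdef, show (xs n - xbar) i = xs n i - xbar i from rfl,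
          hSn0 i hi.1, hxbar0 i hi.2, sub_zero]
      have hTcard6 : ((S₂ ∪ S') ∪ (Sn ∪ S₂)).card ≤ 6 * s := by
        have hEq : (S₂ ∪ S') ∪ (Sn ∪ S₂) = S₂ ∪ (S' ∪ Sn) := by
          ext i
          simp only [Finset.mem_union]
          tauto
        rw [hEq]
        have hu1 := Finset.card_union_le S₂ (S' ∪ Sn)
        have hu2 := Finset.card_union_le S' Sn
        omega
      have hT6 : (S₂ ∪ S').card ≤ 6 * s := by
        have := Finset.card_union_le S₂ S'
        omega
      have hcmp : ∑ i ∈ S₂, ‖u i‖ ^ 2 ≤ ∑ i ∈ S', ‖u i‖ ^ 2 := by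
        apply sum_le_sum_of_dom (fun i => ‖u i‖ ^ 2) (fun i => by positivity) S' S₂ (by omega)
        intro i hi j hj
        exact pow_le_pow_left₀ (norm_nonneg _) (hz3 i hi j hj) 2
      have hstep1 := threshold_step xbar u (xs (n+1)) S₂ S' hxbar0 hz1 hz2 hcmp
      have hdecomp : u - xbar = (w - Aᴴ *ᵥ (A *ᵥ w)) + Aᴴ *ᵥ e' := by
        have h1 : A *ᵥ x + e - A *ᵥ xs n = e' - A *ᵥ w := by
          rw [he'def, hwdef]
          simp only [Matrix.mulVec_sub]
          abel
        rw [hudef, h1, Matrix.mulVec_sub, hwdef]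
        abel
      have hres : res (S₂ ∪ S') (u - xbar)
          = res (S₂ ∪ S') (w - Aᴴ *ᵥ (A *ᵥ w)) + res (S₂ ∪ S') (Aᴴ *ᵥ e') := by
        rw [hdecomp, res_add]
      have hb1 : l2norm (res (S₂ ∪ S') (w - Aᴴ *ᵥ (A *ᵥ w))) ≤ δ * l2norm w := by
        have hneg : res (S₂ ∪ S') (w - Aᴴ *ᵥ (A *ᵥ w))
            = -(res (S₂ ∪ S') (Aᴴ *ᵥ (A *ᵥ w) - w)) := by
          rw [← res_neg]
          congr 1
          abel
        rw [hneg, l2norm_neg']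
        exact res_g_bound A δ (6 * s) hδ0 HH w (Sn ∪ S₂) (S₂ ∪ S') hwsupp hTcard6
      have hb2 : l2norm (res (S₂ ∪ S') (Aᴴ *ᵥ e')) ≤ Real.sqrt (1 + δ) * l2norm e' :=
        res_adj_bound A (6 * s) (Real.sqrt (1 + δ)) (Real.sqrt_nonneg _) hup6 e' (S₂ ∪ S') hT6
      have hcomb : l2norm (res (S₂ ∪ S') (u - xbar))
          ≤ δ * l2norm w + Real.sqrt (1 + δ) * l2norm e' := by
        rw [hres]
        exact le_trans (l2_triangle _ _) (by linarith)
      have hwnorm : l2norm w = l2norm (xbar - xs n) := by rw [hwdef, l2_sub_rev]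
      calc l2norm (xbar - xs (n+1))
          ≤ Real.sqrt 3 * l2norm (res (S₂ ∪ S') (u - xbar)) := hstep1
        _ ≤ Real.sqrt 3 * (δ * l2norm w + Real.sqrt (1 + δ) * l2norm e') :=
            mul_le_mul_of_nonneg_left hcomb h3.le
        _ = Real.sqrt 3 * δ * l2norm (xbar - xs n)
            + Real.sqrt 3 * Real.sqrt (1 + δ) * l2norm e' := by
            rw [hwnorm]; ring
        _ ≤ Real.sqrt 3 * δ * ((Real.sqrt 3 * δ) ^ n * l2norm xbar + K * l2norm e')
            + Real.sqrt 3 * Real.sqrt (1 + δ) * l2norm e' :=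
            by have := mul_le_mul_of_nonneg_left ihn hρ0; linarith
        _ = (Real.sqrt 3 * δ) ^ (n+1) * l2norm xbar
            + (Real.sqrt 3 * δ * K + Real.sqrt 3 * Real.sqrt (1 + δ)) * l2norm e' := by
            ring
        _ = (Real.sqrt 3 * δ) ^ (n+1) * l2norm xbar + K * l2norm e' := by rw [hKrec]
  intro n
  have htri : l2norm (x - xs n) ≤ l2norm (x - xbar) + l2norm (xbar - xs n) := by
    rw [show x - xs n = (x - xbar) + (xbar - xs n) by abel]
    exact l2_triangle _ _
  have hKe' : K * l2norm e'
      ≤ 2 * Real.sqrt (1 + δ) * K * σ / Real.sqrt s + K * l2norm e := by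
    calc K * l2norm e' ≤ K * (2 * Real.sqrt (1 + δ) * σ / Real.sqrt s + l2norm e) :=
        mul_le_mul_of_nonneg_left he'bound hK0
      _ = 2 * Real.sqrt (1 + δ) * K * σ / Real.sqrt s + K * l2norm e := by ring
  have hpow : (Real.sqrt 3 * δ) ^ n * l2norm xbar ≤ (Real.sqrt 3 * δ) ^ n * l2norm x :=
    mul_le_mul_of_nonneg_left hxbarle (pow_nonneg hρ0 n)
  have hCσ : Ccon δ / Real.sqrt s * σ
      = σ / Real.sqrt s + 2 * Real.sqrt (1 + δ) * K * σ / Real.sqrt s := by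
    rw [Ccon, ← hKdef]
    field_simp
  have hmain := main n
  calc l2norm (x - xs n) ≤ l2norm (x - xbar) + l2norm (xbar - xs n) := htri
    _ ≤ σ / Real.sqrt s + ((Real.sqrt 3 * δ) ^ n * l2norm xbar + K * l2norm e') :=
        add_le_add ht2 hmain
    _ ≤ σ / Real.sqrt s + 2 * Real.sqrt (1 + δ) * K * σ / Real.sqrt s
        + K * l2norm e + (Real.sqrt 3 * δ) ^ n * l2norm x := by linarith
    _ = Ccon δ / Real.sqrt s * σ + K * l2norm e + (Real.sqrt 3 * δ) ^ n * l2norm x := by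
        rw [hCσ]
end

section
/- Let A ∈ ℂ^{m×N} and s ≥ 1 be such that the restricted isometry constant of A of order 6s satisfies δ_{6s} < 1/√3. Let x ∈ ℂ^N be s-sparse, set y = Ax (noiseless measurements), and let (x^{(n)})_{n≥0} be any sequence with x^{(0)} = 0 and x^{(n+1)} = H_{2s}(x^{(n)} + A*(y − A x^{(n)})) for all n ≥ 0 (the Iterative Hard Thresholding iteration with sparsity parameter 2s). Then ‖x − x^{(n)}‖_{ℓ²} ≤ ρ^n‖x‖_{ℓ²} with ρ = √3·δ_{6s} < 1 for every n ≥ 0; in particular x^{(n)} → x as n → ∞. -/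
open Matrix Finset

namespace IHT
variable {N : ℕ}

noncomputable def sq2 (v : Fin N → ℂ) : ℝ := ∑ i, ‖v i‖ ^ 2

noncomputable def Rin (a b : Fin N → ℂ) : ℝ := ∑ i, ((starRingEnd ℂ) (a i) * b i).re

lemma sq2_nonneg (v : Fin N → ℂ) : 0 ≤ sq2 v :=
  Finset.sum_nonneg fun i _ => by positivity

lemma l2norm_eq (v : Fin N → ℂ) : l2norm v = Real.sqrt (sq2 v) := rfl

lemma l2norm_nonneg (v : Fin N → ℂ) : 0 ≤ l2norm v := Real.sqrt_nonneg _

lemma l2norm_sq (v : Fin N → ℂ) : l2norm v ^ 2 = sq2 v :=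
  Real.sq_sqrt (sq2_nonneg v)

lemma norm_sq_complex (z : ℂ) : ‖z‖ ^ 2 = z.re ^ 2 + z.im ^ 2 := by
  rw [Complex.sq_norm, Complex.normSq_apply]; ring

lemma ptwise_add (z w : ℂ) : ‖z + w‖ ^ 2 = ‖z‖ ^ 2 + ‖w‖ ^ 2 + 2 * ((starRingEnd ℂ) z * w).re := by
  simp only [norm_sq_complex, Complex.add_re, Complex.add_im, Complex.mul_re,
    Complex.conj_re, Complex.conj_im]
  ring

lemma ptwise_sub (z w : ℂ) : ‖z - w‖ ^ 2 = ‖z‖ ^ 2 + ‖w‖ ^ 2 - 2 * ((starRingEnd ℂ) z * w).re := by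
  simp only [norm_sq_complex, Complex.sub_re, Complex.sub_im, Complex.mul_re,
    Complex.conj_re, Complex.conj_im]
  ring

lemma sq2_add (a b : Fin N → ℂ) : sq2 (a + b) = sq2 a + sq2 b + 2 * Rin a b := by
  simp only [sq2, Rin, Pi.add_apply, ptwise_add, Finset.sum_add_distrib, Finset.mul_sum]

lemma sq2_sub (a b : Fin N → ℂ) : sq2 (a - b) = sq2 a + sq2 b - 2 * Rin a b := by
  simp only [sq2, Rin, Pi.sub_apply, ptwise_sub, Finset.sum_sub_distrib, Finset.sum_add_distrib,
    Finset.mul_sum]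


section Adj
variable {m : ℕ}

lemma Rin_adjoint (A : Matrix (Fin m) (Fin N) ℂ) (y : Fin m → ℂ) (b : Fin N → ℂ) :
    Rin (Aᴴ *ᵥ y) b = Rin y (A *ᵥ b) := by
  unfold Rin
  have : (∑ i, ((starRingEnd ℂ) ((Aᴴ *ᵥ y) i) * b i)) =
      ∑ j, ((starRingEnd ℂ) (y j) * ((A *ᵥ b) j)) := by
    simp only [Matrix.mulVec, dotProduct, Matrix.conjTranspose_apply, map_sum, _root_.map_mul,
      RingHomCompTriple.comp_apply, RingHom.id_apply, Finset.sum_mul, Finset.mul_sum,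
      starRingEnd_self_apply]
    rw [Finset.sum_comm]
    exact Finset.sum_congr rfl fun j _ => Finset.sum_congr rfl fun i _ => by
      simp only [star_mul', starRingEnd_apply, star_star]
      ring
  calc (∑ i, ((starRingEnd ℂ) ((Aᴴ *ᵥ y) i) * b i).re)
      = (∑ i, ((starRingEnd ℂ) ((Aᴴ *ᵥ y) i) * b i)).re := by rw [Complex.re_sum]
    _ = (∑ j, ((starRingEnd ℂ) (y j) * ((A *ᵥ b) j))).re := by rw [this]
    _ = _ := by rw [Complex.re_sum]

end Adj

lemma Rin_le_cs (a b : Fin N → ℂ) : Rin a b ≤ l2norm a * l2norm b := by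
  have h1 : Rin a b ≤ ∑ i, ‖a i‖ * ‖b i‖ := by
    refine Finset.sum_le_sum fun i _ => ?_
    calc ((starRingEnd ℂ) (a i) * b i).re ≤ ‖(starRingEnd ℂ) (a i) * b i‖ :=
          Complex.re_le_norm _
      _ = ‖a i‖ * ‖b i‖ := by rw [norm_mul, RCLike.norm_conj]
  exact h1.trans (Real.sum_mul_le_sqrt_mul_sqrt Finset.univ _ _)

lemma l2norm_add_le (a b : Fin N → ℂ) : l2norm (a + b) ≤ l2norm a + l2norm b := by
  have h : sq2 (a + b) ≤ (l2norm a + l2norm b) ^ 2 := by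
    rw [sq2_add]
    have := Rin_le_cs a b
    have ha := l2norm_sq a; have hb := l2norm_sq b
    nlinarith
  rw [l2norm_eq]
  calc Real.sqrt (sq2 (a+b)) ≤ Real.sqrt ((l2norm a + l2norm b)^2) := Real.sqrt_le_sqrt h
    _ = l2norm a + l2norm b := Real.sqrt_sq (by have := l2norm_nonneg a; have := l2norm_nonneg b; linarith)

def restr (S : Finset (Fin N)) (v : Fin N → ℂ) : Fin N → ℂ := fun i => if i ∈ S then v i else 0

lemma sq2_restr (S : Finset (Fin N)) (v : Fin N → ℂ) :
    sq2 (restr S v) = ∑ i ∈ S, ‖v i‖ ^ 2 := by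
  unfold sq2 restr
  rw [← Finset.sum_filter_add_sum_filter_not Finset.univ (· ∈ S)]
  have h1 : ∀ i ∈ Finset.univ.filter (· ∈ S), ‖if i ∈ S then v i else 0‖ ^ 2 = ‖v i‖ ^ 2 := by
    intro i hi; simp only [Finset.mem_filter] at hi; rw [if_pos hi.2]
  have h2 : ∀ i ∈ Finset.univ.filter (¬ · ∈ S), ‖if i ∈ S then v i else 0‖ ^ 2 = 0 := by
    intro i hi; simp only [Finset.mem_filter] at hi; rw [if_neg hi.2]; simp
  rw [Finset.sum_congr rfl h1, Finset.sum_congr rfl h2, Finset.sum_const_zero, add_zero]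
  congr 1
  ext i; simp

lemma support_restr (S : Finset (Fin N)) (v : Fin N → ℂ) :
    Function.support (restr S v) ⊆ ↑S := by
  intro i hi
  by_contra h
  exact hi (if_neg (fun hm => h (Finset.mem_coe.mpr hm)))

section RICspec
variable {m : ℕ}

lemma ric_spec (A : Matrix (Fin m) (Fin N) ℂ) (t : ℕ) :
    0 ≤ RIC A t ∧ ∀ x : Fin N → ℂ, IsSparse t x →
      (1 - RIC A t) * l2norm x ^ 2 ≤ l2norm (A *ᵥ x) ^ 2 ∧
        l2norm (A *ᵥ x) ^ 2 ≤ (1 + RIC A t) * l2norm x ^ 2 := by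
  set Sδ := {δ : ℝ | 0 ≤ δ ∧ ∀ x : Fin N → ℂ, IsSparse t x →
    (1 - δ) * l2norm x ^ 2 ≤ l2norm (A *ᵥ x) ^ 2 ∧
      l2norm (A *ᵥ x) ^ 2 ≤ (1 + δ) * l2norm x ^ 2} with hSδ
  have hbdd : BddBelow Sδ := ⟨0, fun δ hδ => hδ.1⟩
  -- boundedness of A
  set C : ℝ := ∑ i, ∑ j, ‖A i j‖ ^ 2 with hC
  have hCb : ∀ x : Fin N → ℂ, l2norm (A *ᵥ x) ^ 2 ≤ C * l2norm x ^ 2 := by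
    intro x
    rw [l2norm_sq, l2norm_sq]
    unfold sq2
    rw [hC, Finset.sum_mul]
    refine Finset.sum_le_sum fun i _ => ?_
    have h1 : ‖(A *ᵥ x) i‖ ≤ ∑ j, ‖A i j‖ * ‖x j‖ := by
      simp only [Matrix.mulVec, dotProduct]
      refine (norm_sum_le _ _).trans_eq ?_
      exact Finset.sum_congr rfl fun j _ => norm_mul _ _
    calc ‖(A *ᵥ x) i‖ ^ 2 ≤ (∑ j, ‖A i j‖ * ‖x j‖) ^ 2 := by
          have := norm_nonneg ((A *ᵥ x) i); nlinarith
      _ ≤ (∑ j, ‖A i j‖ ^ 2) * ∑ j, ‖x j‖ ^ 2 := Finset.sum_mul_sq_le_sq_mul_sq _ _ _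
  have hne : Sδ.Nonempty := by
    refine ⟨max 1 C, le_trans zero_le_one (le_max_left _ _), fun x _ => ⟨?_, ?_⟩⟩
    · have h1 : (1 : ℝ) ≤ max 1 C := le_max_left _ _
      have h2 : 0 ≤ l2norm x ^ 2 := sq_nonneg _
      have h3 : 0 ≤ l2norm (A *ᵥ x) ^ 2 := sq_nonneg _
      nlinarith
    · have h1 : C ≤ max 1 C := le_max_right _ _
      have h2 : 0 ≤ l2norm x ^ 2 := sq_nonneg _
      calc l2norm (A *ᵥ x) ^ 2 ≤ C * l2norm x ^ 2 := hCb x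
        _ ≤ (1 + max 1 C) * l2norm x ^ 2 := by nlinarith
  have hcl : IsClosed Sδ := by
    have heq : Sδ = Set.Ici 0 ∩ ⋂ (x : Fin N → ℂ), ⋂ (_ : IsSparse t x),
        ({δ : ℝ | (1 - δ) * l2norm x ^ 2 ≤ l2norm (A *ᵥ x) ^ 2} ∩
          {δ : ℝ | l2norm (A *ᵥ x) ^ 2 ≤ (1 + δ) * l2norm x ^ 2}) := by
      ext δ
      simp only [hSδ, Set.mem_setOf_eq, Set.mem_inter_iff, Set.mem_iInter, Set.mem_Ici]
    rw [heq]
    refine isClosed_Ici.inter (isClosed_iInter fun x => isClosed_iInter fun _ => ?_)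
    exact (isClosed_le (by fun_prop) continuous_const).inter
      (isClosed_le continuous_const (by fun_prop))
  have hmem : RIC A t ∈ Sδ := by
    rw [RIC, ← hSδ]
    exact hcl.csInf_mem hne hbdd
  exact hmem

end RICspec

lemma l2norm_eq_zero_iff (v : Fin N → ℂ) : l2norm v = 0 ↔ v = 0 := by
  rw [l2norm_eq, Real.sqrt_eq_zero (sq2_nonneg v)]
  constructor
  · intro h
    funext i
    have hle : ‖v i‖ ^ 2 ≤ 0 := by
      rw [← h]
      exact Finset.single_le_sum (f := fun i => ‖v i‖ ^ 2) (fun j _ => by positivity)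
        (Finset.mem_univ i)
    have : ‖v i‖ = 0 := by nlinarith [norm_nonneg (v i)]
    simpa using this
  · intro h; rw [h]; simp [sq2]

lemma Rin_sub_left (a b c : Fin N → ℂ) : Rin (a - b) c = Rin a c - Rin b c := by
  unfold Rin
  rw [← Finset.sum_sub_distrib]
  refine Finset.sum_congr rfl fun i _ => ?_
  simp only [Pi.sub_apply, map_sub, sub_mul, Complex.sub_re]

lemma Rin_smul (c d : ℝ) (a b : Fin N → ℂ) :
    Rin ((c : ℂ) • a) ((d : ℂ) • b) = c * d * Rin a b := by
  unfold Rin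
  rw [Finset.mul_sum]
  refine Finset.sum_congr rfl fun i _ => ?_
  simp only [Pi.smul_apply, smul_eq_mul, _root_.map_mul, Complex.conj_ofReal]
  have : (c : ℂ) * (starRingEnd ℂ) (a i) * ((d : ℂ) * b i)
      = ((c * d : ℝ) : ℂ) * ((starRingEnd ℂ) (a i) * b i) := by
    push_cast; ring
  rw [this, Complex.re_ofReal_mul]

lemma sq2_smul (c : ℝ) (a : Fin N → ℂ) :
    sq2 ((c : ℂ) • a) = c ^ 2 * sq2 a := by
  unfold sq2
  rw [Finset.mul_sum]
  refine Finset.sum_congr rfl fun i _ => ?_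
  rw [Pi.smul_apply, smul_eq_mul, norm_mul, mul_pow, Complex.norm_real, Real.norm_eq_abs, sq_abs]

section RIP
variable {m : ℕ}

lemma rip_re (A : Matrix (Fin m) (Fin N) ℂ) (t : ℕ) (a b : Fin N → ℂ)
    (h : (Function.support a ∪ Function.support b).ncard ≤ t) :
    Rin (a - Aᴴ *ᵥ (A *ᵥ a)) b ≤ RIC A t / 2 * (sq2 a + sq2 b) := by
  obtain ⟨hδ0, hδ⟩ := ric_spec A t
  set δ := RIC A t
  have hfin : (Function.support a ∪ Function.support b).Finite := Set.toFinite _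
  have hsp1 : IsSparse t (a + b) := by
    refine le_trans (Set.ncard_le_ncard ?_ hfin) h
    intro i hi
    contrapose! hi
    simp only [Set.mem_union, Function.mem_support, not_or, not_not] at hi
    simp [Function.notMem_support, Pi.add_apply, hi.1, hi.2]
  have hsp2 : IsSparse t (a - b) := by
    refine le_trans (Set.ncard_le_ncard ?_ hfin) h
    intro i hi
    contrapose! hi
    simp only [Set.mem_union, Function.mem_support, not_or, not_not] at hi
    simp [Function.notMem_support, Pi.sub_apply, hi.1, hi.2]
  obtain ⟨h1l, h1u⟩ := hδ _ hsp1
  obtain ⟨h2l, h2u⟩ := hδ _ hsp2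
  rw [l2norm_sq, l2norm_sq] at h1l h1u h2l h2u
  have hsplit : Rin (a - Aᴴ *ᵥ (A *ᵥ a)) b = Rin a b - Rin (A *ᵥ a) (A *ᵥ b) := by
    rw [Rin_sub_left, Rin_adjoint]
  have hpol1 : sq2 (a + b) = sq2 a + sq2 b + 2 * Rin a b := sq2_add a b
  have hpol2 : sq2 (a - b) = sq2 a + sq2 b - 2 * Rin a b := sq2_sub a b
  have hA1 : A *ᵥ (a + b) = A *ᵥ a + A *ᵥ b := Matrix.mulVec_add A a b
  have hA2 : A *ᵥ (a - b) = A *ᵥ a - A *ᵥ b := Matrix.mulVec_sub A a b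
  have hpol3 : sq2 (A *ᵥ (a + b)) = sq2 (A *ᵥ a) + sq2 (A *ᵥ b) + 2 * Rin (A *ᵥ a) (A *ᵥ b) := by
    rw [hA1]; exact sq2_add _ _
  have hpol4 : sq2 (A *ᵥ (a - b)) = sq2 (A *ᵥ a) + sq2 (A *ᵥ b) - 2 * Rin (A *ᵥ a) (A *ᵥ b) := by
    rw [hA2]; exact sq2_sub _ _
  rw [hsplit]
  nlinarith [sq2_nonneg (a + b), sq2_nonneg (a - b)]

lemma rip_re_scaled (A : Matrix (Fin m) (Fin N) ℂ) (t : ℕ) (a b : Fin N → ℂ)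
    (h : (Function.support a ∪ Function.support b).ncard ≤ t) :
    Rin (a - Aᴴ *ᵥ (A *ᵥ a)) b ≤ RIC A t * l2norm a * l2norm b := by
  obtain ⟨hδ0, _⟩ := ric_spec A t
  by_cases ha : l2norm a = 0
  · have ha0 : a = 0 := (l2norm_eq_zero_iff a).mp ha
    subst ha0
    have : (0 : Fin N → ℂ) - Aᴴ *ᵥ (A *ᵥ 0) = 0 := by
      simp [Matrix.mulVec_zero]
    rw [this]
    simp only [Rin]
    have : ∀ i : Fin N, ((starRingEnd ℂ) ((0 : Fin N → ℂ) i) * b i).re = 0 := by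
      intro i; simp
    rw [Finset.sum_congr rfl fun i _ => this i, Finset.sum_const_zero]
    exact mul_nonneg (mul_nonneg hδ0 (l2norm_nonneg _)) (l2norm_nonneg _)
  by_cases hb : l2norm b = 0
  · have hb0 : b = 0 := (l2norm_eq_zero_iff b).mp hb
    subst hb0
    have : Rin (a - Aᴴ *ᵥ (A *ᵥ a)) (0 : Fin N → ℂ) = 0 := by
      simp [Rin]
    rw [this]
    exact mul_nonneg (mul_nonneg hδ0 (l2norm_nonneg _)) (l2norm_nonneg _)
  have hapos : 0 < l2norm a := lt_of_le_of_ne (l2norm_nonneg a) (Ne.symm ha)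
  have hbpos : 0 < l2norm b := lt_of_le_of_ne (l2norm_nonneg b) (Ne.symm hb)
  set c : ℝ := Real.sqrt (l2norm b / l2norm a) with hc
  have hcpos : 0 < c := Real.sqrt_pos.mpr (by positivity)
  set a' : Fin N → ℂ := (c : ℂ) • a with ha'
  set b' : Fin N → ℂ := ((c⁻¹ : ℝ) : ℂ) • b with hb'
  have hsupp : Function.support a' ∪ Function.support b'
      = Function.support a ∪ Function.support b := by
    have h1 : Function.support a' = Function.support a := by
      ext i; simp only [ha', Pi.smul_apply, smul_eq_mul, Function.mem_support, mul_ne_zero_iff]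
      constructor
      · exact fun hh => hh.2
      · exact fun hh => ⟨by exact_mod_cast hcpos.ne', hh⟩
    have h2 : Function.support b' = Function.support b := by
      ext i; simp only [hb', Pi.smul_apply, smul_eq_mul, Function.mem_support, mul_ne_zero_iff]
      constructor
      · exact fun hh => hh.2
      · refine fun hh => ⟨?_, hh⟩
        exact_mod_cast (inv_pos.mpr hcpos).ne'
    rw [h1, h2]
  have hkey := rip_re A t a' b' (by rw [hsupp]; exact h)
  have hga' : a' - Aᴴ *ᵥ (A *ᵥ a') = (c : ℂ) • (a - Aᴴ *ᵥ (A *ᵥ a)) := by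
    rw [ha', Matrix.mulVec_smul, Matrix.mulVec_smul, smul_sub]
  have hrw : Rin (a' - Aᴴ *ᵥ (A *ᵥ a')) b' = c * c⁻¹ * Rin (a - Aᴴ *ᵥ (A *ᵥ a)) b := by
    rw [hga']
    exact Rin_smul c c⁻¹ _ _
  rw [hrw, mul_inv_cancel₀ hcpos.ne', one_mul] at hkey
  have hsq2a : sq2 a' = c ^ 2 * sq2 a := sq2_smul c a
  have hsq2b : sq2 b' = (c⁻¹) ^ 2 * sq2 b := sq2_smul c⁻¹ b
  rw [hsq2a, hsq2b] at hkey
  have hc2 : c ^ 2 = l2norm b / l2norm a := Real.sq_sqrt (by positivity)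
  have hc2' : (c⁻¹) ^ 2 = l2norm a / l2norm b := by
    rw [inv_pow, hc2]
    field_simp
  rw [hc2, hc2'] at hkey
  have hsa : sq2 a = l2norm a ^ 2 := (l2norm_sq a).symm
  have hsb : sq2 b = l2norm b ^ 2 := (l2norm_sq b).symm
  rw [hsa, hsb] at hkey
  calc Rin (a - Aᴴ *ᵥ (A *ᵥ a)) b ≤ RIC A t / 2 *
        (l2norm b / l2norm a * l2norm a ^ 2 + l2norm a / l2norm b * l2norm b ^ 2) := hkey
    _ = RIC A t * l2norm a * l2norm b := by
        field_simp
        ring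

lemma rip_restr (A : Matrix (Fin m) (Fin N) ℂ) (t : ℕ) (w : Fin N → ℂ) (V : Finset (Fin N))
    (h : (Function.support w ∪ ↑V).ncard ≤ t) :
    l2norm (restr V (w - Aᴴ *ᵥ (A *ᵥ w))) ≤ RIC A t * l2norm w := by
  obtain ⟨hδ0, _⟩ := ric_spec A t
  set v := restr V (w - Aᴴ *ᵥ (A *ᵥ w)) with hv
  have hsupp : (Function.support w ∪ Function.support v).ncard ≤ t := by
    refine le_trans (Set.ncard_le_ncard ?_ (Set.toFinite _)) h
    exact Set.union_subset_union_right _ (support_restr _ _)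
  have hkey := rip_re_scaled A t w v hsupp
  have hveq : sq2 v = Rin (w - Aᴴ *ᵥ (A *ᵥ w)) v := by
    unfold sq2 Rin
    refine Finset.sum_congr rfl fun i _ => ?_
    by_cases hi : i ∈ V
    · have hvi : v i = (w - Aᴴ *ᵥ (A *ᵥ w)) i := if_pos hi
      rw [hvi]
      rw [norm_sq_complex]
      simp only [Complex.mul_re, Complex.conj_re, Complex.conj_im]
      ring
    · have hvi : v i = 0 := if_neg hi
      rw [hvi]
      simp
  have hsq : l2norm v ^ 2 ≤ RIC A t * l2norm w * l2norm v := by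
    rw [l2norm_sq, hveq]; exact hkey
  by_cases hz : l2norm v = 0
  · rw [hz]
    exact mul_nonneg hδ0 (l2norm_nonneg _)
  · have hpos : 0 < l2norm v := lt_of_le_of_ne (l2norm_nonneg v) (Ne.symm hz)
    nlinarith

end RIP

lemma exists_suppF (v : Fin N → ℂ) (s : ℕ) (h : IsSparse s v) :
    ∃ S : Finset (Fin N), (∀ i ∉ S, v i = 0) ∧ S.card ≤ s := by
  have hfin := Set.toFinite (Function.support v)
  refine ⟨hfin.toFinset, ?_, ?_⟩
  · intro i hi
    by_contra hvi
    exact hi ((Set.Finite.mem_toFinset _).mpr hvi)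
  · rw [← Set.ncard_eq_toFinset_card _ hfin]
    exact h

lemma threshold_sum (u : Fin N → ℂ) (T S : Finset (Fin N))
    (hcard : S.card ≤ T.card)
    (hmax : ∀ i ∈ T, ∀ j ∉ T, ‖u j‖ ≤ ‖u i‖) :
    ∑ j ∈ S \ T, ‖u j‖ ^ 2 ≤ ∑ i ∈ T \ S, ‖u i‖ ^ 2 := by
  have hcard2 : (S \ T).card ≤ (T \ S).card := by
    have h1 : (S ∩ T).card + (S \ T).card = S.card := Finset.card_inter_add_card_sdiff S T
    have h2 : (T ∩ S).card + (T \ S).card = T.card := Finset.card_inter_add_card_sdiff T S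
    have h3 : (S ∩ T).card = (T ∩ S).card := by rw [Finset.inter_comm]
    omega
  rcases Finset.eq_empty_or_nonempty (S \ T) with hST | hST
  · rw [hST, Finset.sum_empty]
    exact Finset.sum_nonneg fun i _ => by positivity
  · have hTS : (T \ S).Nonempty := by
      rw [← Finset.card_pos] at hST ⊢
      omega
    obtain ⟨i₀, hi₀, hinf⟩ := Finset.exists_mem_eq_inf' hTS (fun i => ‖u i‖ ^ 2)
    set c := (T \ S).inf' hTS (fun i => ‖u i‖ ^ 2) with hc
    have hcnn : 0 ≤ c := by rw [hinf]; positivity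
    have hub : ∀ j ∈ S \ T, ‖u j‖ ^ 2 ≤ c := by
      intro j hj
      rw [hinf]
      have hjT : j ∉ T := (Finset.mem_sdiff.mp hj).2
      have hi₀T : i₀ ∈ T := (Finset.mem_sdiff.mp hi₀).1
      have := hmax i₀ hi₀T j hjT
      nlinarith [norm_nonneg (u j)]
    have hlb : ∀ i ∈ T \ S, c ≤ ‖u i‖ ^ 2 := fun i hi => Finset.inf'_le _ hi
    calc ∑ j ∈ S \ T, ‖u j‖ ^ 2 ≤ (S \ T).card • c := Finset.sum_le_card_nsmul _ _ c hub
      _ ≤ (T \ S).card • c := by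
          rw [nsmul_eq_mul, nsmul_eq_mul]
          exact mul_le_mul_of_nonneg_right (by exact_mod_cast hcard2) hcnn
      _ ≤ ∑ i ∈ T \ S, ‖u i‖ ^ 2 := Finset.card_nsmul_le_sum _ _ c hlb

section Step
variable {m : ℕ}

lemma step_lemma (A : Matrix (Fin m) (Fin N) ℂ) (s : ℕ)
    (x xn xn1 : Fin N → ℂ) (hx : IsSparse s x) (hxn : IsSparse (2 * s) xn)
    (hht : IsHT (2 * s) (xn + Aᴴ *ᵥ (A *ᵥ x - A *ᵥ xn)) xn1) :
    l2norm (x - xn1) ≤ Real.sqrt 3 * RIC A (6 * s) * l2norm (x - xn) ∧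
      IsSparse (2 * s) xn1 := by
  obtain ⟨T, hTcard, hTeq, hTzero, hTmax⟩ := hht
  set u : Fin N → ℂ := xn + Aᴴ *ᵥ (A *ᵥ x - A *ᵥ xn) with hu
  set g : Fin N → ℂ := (x - xn) - Aᴴ *ᵥ (A *ᵥ (x - xn)) with hg
  have hxu : ∀ i, x i - u i = g i := by
    intro i
    simp only [hu, hg, Matrix.mulVec_sub, Pi.add_apply, Pi.sub_apply]
    ring
  obtain ⟨S₀, hS₀z, hS₀c⟩ := exists_suppF x s hx
  obtain ⟨Sn, hSnz, hSnc⟩ := exists_suppF xn (2 * s) hxn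
  have hTc2 : T.card ≤ 2 * s := by rw [hTcard]; exact min_le_left _ _
  have hsparse1 : IsSparse (2 * s) xn1 := by
    have hsub : Function.support xn1 ⊆ ↑T := by
      intro i hi
      by_contra hiT
      exact hi (hTzero i (fun hm => hiT (Finset.mem_coe.mpr hm)))
    calc (Function.support xn1).ncard ≤ (↑T : Set (Fin N)).ncard :=
          Set.ncard_le_ncard hsub (Set.toFinite _)
      _ = T.card := Set.ncard_coe_finset T
      _ ≤ 2 * s := hTc2
  refine ⟨?_, hsparse1⟩
  -- splitting the squared norm
  have h1 : ∀ i ∈ T, ‖(x - xn1) i‖ ^ 2 = ‖g i‖ ^ 2 := by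
    intro i hi
    rw [Pi.sub_apply, hTeq i hi, hxu i]
  have h2 : ∑ i ∈ Tᶜ, ‖(x - xn1) i‖ ^ 2 = ∑ i ∈ S₀ \ T, ‖x i‖ ^ 2 := by
    have ha : ∀ i ∈ Tᶜ, ‖(x - xn1) i‖ ^ 2 = ‖x i‖ ^ 2 := by
      intro i hi
      rw [Pi.sub_apply, hTzero i (Finset.mem_compl.mp hi), sub_zero]
    rw [Finset.sum_congr rfl ha]
    symm
    refine Finset.sum_subset ?_ ?_
    · intro i hi
      rw [Finset.mem_sdiff] at hi
      exact Finset.mem_compl.mpr hi.2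
    · intro i hi hni
      have hiS₀ : i ∉ S₀ := by
        intro hiS
        exact hni (Finset.mem_sdiff.mpr ⟨hiS, Finset.mem_compl.mp hi⟩)
      rw [hS₀z i hiS₀]
      simp
  have hsplit : sq2 (x - xn1) = (∑ i ∈ T, ‖g i‖ ^ 2) + ∑ i ∈ S₀ \ T, ‖x i‖ ^ 2 := by
    unfold sq2
    rw [← Finset.sum_add_sum_compl T (fun i => ‖(x - xn1) i‖ ^ 2),
      Finset.sum_congr rfl h1, h2]
  -- triangle inequality on S₀ \ T
  have hrestr : restr (S₀ \ T) x = restr (S₀ \ T) g + restr (S₀ \ T) u := by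
    funext i
    simp only [restr, Pi.add_apply]
    split
    · rw [← hxu i]; ring
    · rw [add_zero]
  have htri : Real.sqrt (∑ i ∈ S₀ \ T, ‖x i‖ ^ 2) ≤
      Real.sqrt (∑ i ∈ S₀ \ T, ‖g i‖ ^ 2) + Real.sqrt (∑ i ∈ S₀ \ T, ‖u i‖ ^ 2) := by
    have e1 : Real.sqrt (∑ i ∈ S₀ \ T, ‖x i‖ ^ 2) = l2norm (restr (S₀ \ T) x) := by
      rw [l2norm_eq, sq2_restr]
    have e2 : Real.sqrt (∑ i ∈ S₀ \ T, ‖g i‖ ^ 2) = l2norm (restr (S₀ \ T) g) := by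
      rw [l2norm_eq, sq2_restr]
    have e3 : Real.sqrt (∑ i ∈ S₀ \ T, ‖u i‖ ^ 2) = l2norm (restr (S₀ \ T) u) := by
      rw [l2norm_eq, sq2_restr]
    rw [e1, e2, e3, hrestr]
    exact l2norm_add_le _ _
  -- thresholding comparison
  have hScard : S₀.card ≤ T.card := by
    rw [hTcard]
    refine le_min (hS₀c.trans (by omega)) ?_
    calc S₀.card ≤ Finset.univ.card := Finset.card_le_univ S₀
      _ = N := by rw [Finset.card_univ, Fintype.card_fin]
  have hthr : ∑ i ∈ S₀ \ T, ‖u i‖ ^ 2 ≤ ∑ i ∈ T \ S₀, ‖u i‖ ^ 2 :=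
    threshold_sum u T S₀ hScard hTmax
  have hgu : ∑ i ∈ T \ S₀, ‖u i‖ ^ 2 = ∑ i ∈ T \ S₀, ‖g i‖ ^ 2 := by
    refine Finset.sum_congr rfl fun i hi => ?_
    have hiS₀ : i ∉ S₀ := (Finset.mem_sdiff.mp hi).2
    have hx0 : x i = 0 := hS₀z i hiS₀
    have : g i = -u i := by rw [← hxu i, hx0]; ring
    rw [this, norm_neg]
  -- abbreviations
  set a2 := ∑ i ∈ S₀ \ T, ‖g i‖ ^ 2 with ha2
  set b2 := ∑ i ∈ T \ S₀, ‖g i‖ ^ 2 with hb2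
  set t2 := ∑ i ∈ T, ‖g i‖ ^ 2 with ht2
  have ha2nn : 0 ≤ a2 := Finset.sum_nonneg fun i _ => by positivity
  have hb2nn : 0 ≤ b2 := Finset.sum_nonneg fun i _ => by positivity
  have ht2nn : 0 ≤ t2 := Finset.sum_nonneg fun i _ => by positivity
  have hb2t2 : b2 ≤ t2 := by
    refine Finset.sum_le_sum_of_subset_of_nonneg (Finset.sdiff_subset) fun i _ _ => by positivity
  have hxsum : ∑ i ∈ S₀ \ T, ‖x i‖ ^ 2 ≤ (Real.sqrt a2 + Real.sqrt b2) ^ 2 := by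
    have hnn : 0 ≤ ∑ i ∈ S₀ \ T, ‖x i‖ ^ 2 := Finset.sum_nonneg fun i _ => by positivity
    have husum : Real.sqrt (∑ i ∈ S₀ \ T, ‖u i‖ ^ 2) ≤ Real.sqrt b2 :=
      Real.sqrt_le_sqrt (hthr.trans_eq hgu)
    have h' : Real.sqrt (∑ i ∈ S₀ \ T, ‖x i‖ ^ 2) ≤ Real.sqrt a2 + Real.sqrt b2 :=
      htri.trans (by linarith)
    calc ∑ i ∈ S₀ \ T, ‖x i‖ ^ 2 = Real.sqrt (∑ i ∈ S₀ \ T, ‖x i‖ ^ 2) ^ 2 :=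
          (Real.sq_sqrt hnn).symm
      _ ≤ (Real.sqrt a2 + Real.sqrt b2) ^ 2 := by
          have hs1 : 0 ≤ Real.sqrt (∑ i ∈ S₀ \ T, ‖x i‖ ^ 2) := Real.sqrt_nonneg _
          nlinarith
  have hVsum : sq2 (restr (S₀ ∪ T) g) = a2 + t2 := by
    rw [sq2_restr]
    rw [← Finset.sdiff_union_self_eq_union, Finset.sum_union Finset.sdiff_disjoint]
  have hkey : sq2 (x - xn1) ≤ 3 * sq2 (restr (S₀ ∪ T) g) := by
    rw [hsplit, hVsum]
    have hab : (Real.sqrt a2 + Real.sqrt b2) ^ 2 ≤ 2 * a2 + 2 * b2 := by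
      have h1 : Real.sqrt a2 ^ 2 = a2 := Real.sq_sqrt ha2nn
      have h2 : Real.sqrt b2 ^ 2 = b2 := Real.sq_sqrt hb2nn
      nlinarith [Real.sqrt_nonneg a2, Real.sqrt_nonneg b2, sq_nonneg (Real.sqrt a2 - Real.sqrt b2)]
    nlinarith
  -- sparsity for rip_restr
  have hsupp6 : (Function.support (x - xn) ∪ ↑(S₀ ∪ T)).ncard ≤ 6 * s := by
    have hsub : Function.support (x - xn) ∪ ↑(S₀ ∪ T) ⊆ ↑(S₀ ∪ Sn ∪ (S₀ ∪ T)) := by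
      intro i hi
      rcases hi with hi | hi
      · have : x i ≠ 0 ∨ xn i ≠ 0 := by
          by_contra hcon
          push_neg at hcon
          exact hi (by simp [Pi.sub_apply, hcon.1, hcon.2])
        rcases this with hxi | hxni
        · have : i ∈ S₀ := by
            by_contra hni
            exact hxi (hS₀z i hni)
          simp [Finset.mem_union, this]
        · have : i ∈ Sn := by
            by_contra hni
            exact hxni (hSnz i hni)
          simp [Finset.mem_union, this]
      · have : i ∈ S₀ ∪ T := Finset.mem_coe.mp hi
        simp [Finset.mem_union] at this ⊢
        tauto
    calc (Function.support (x - xn) ∪ ↑(S₀ ∪ T)).ncard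
        ≤ (↑(S₀ ∪ Sn ∪ (S₀ ∪ T)) : Set (Fin N)).ncard :=
          Set.ncard_le_ncard hsub (Set.toFinite _)
      _ = (S₀ ∪ Sn ∪ (S₀ ∪ T)).card := Set.ncard_coe_finset _
      _ ≤ S₀.card + Sn.card + (S₀.card + T.card) := by
          refine (Finset.card_union_le _ _).trans ?_
          gcongr <;> exact Finset.card_union_le _ _
      _ ≤ 6 * s := by omega
  have hrip := rip_restr A (6 * s) (x - xn) (S₀ ∪ T) hsupp6
  -- conclude
  have h3nn : (0 : ℝ) ≤ Real.sqrt 3 := Real.sqrt_nonneg 3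
  calc l2norm (x - xn1) = Real.sqrt (sq2 (x - xn1)) := l2norm_eq _
    _ ≤ Real.sqrt (3 * sq2 (restr (S₀ ∪ T) g)) := Real.sqrt_le_sqrt hkey
    _ = Real.sqrt 3 * Real.sqrt (sq2 (restr (S₀ ∪ T) g)) := Real.sqrt_mul (by norm_num) _
    _ = Real.sqrt 3 * l2norm (restr (S₀ ∪ T) g) := by rw [l2norm_eq]
    _ ≤ Real.sqrt 3 * (RIC A (6 * s) * l2norm (x - xn)) := by
        rw [hg]
        exact mul_le_mul_of_nonneg_left hrip h3nn
    _ = Real.sqrt 3 * RIC A (6 * s) * l2norm (x - xn) := by ring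

end Step

end IHT


/-- Noiseless recovery of an `s`-sparse vector by Iterative Hard Thresholding under
the RIP condition `δ_{6s} < 1/√3`: geometric convergence `‖x − x⁽ⁿ⁾‖₂ ≤ ρⁿ‖x‖₂`
with `ρ = √3 δ_{6s} < 1`, and in particular `x⁽ⁿ⁾ → x`. -/
theorem iht_noiseless_recovery {m N : ℕ} (s : ℕ) (hs : 1 ≤ s)
    (A : Matrix (Fin m) (Fin N) ℂ) (hδ : RIC A (6 * s) < 1 / Real.sqrt 3)
    (x : Fin N → ℂ) (hx : IsSparse s x) (xs : ℕ → Fin N → ℂ) (h0 : xs 0 = 0)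
    (hiter : ∀ n : ℕ,
      IsHT (2 * s) (xs n + Aᴴ *ᵥ (A *ᵥ x - A *ᵥ xs n)) (xs (n + 1))) :
    Real.sqrt 3 * RIC A (6 * s) < 1 ∧
    (∀ n : ℕ, l2norm (x - xs n) ≤ (Real.sqrt 3 * RIC A (6 * s)) ^ n * l2norm x) ∧
    Filter.Tendsto xs Filter.atTop (nhds x) := by
  obtain ⟨hδ0, -⟩ := IHT.ric_spec A (6 * s)
  have h3pos : (0:ℝ) < Real.sqrt 3 := Real.sqrt_pos.mpr (by norm_num)
  have hρlt : Real.sqrt 3 * RIC A (6 * s) < 1 := by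
    have h3 : Real.sqrt 3 * (1 / Real.sqrt 3) = 1 := by field_simp
    calc Real.sqrt 3 * RIC A (6 * s) < Real.sqrt 3 * (1 / Real.sqrt 3) :=
          mul_lt_mul_of_pos_left hδ h3pos
      _ = 1 := h3
  have hρ0 : 0 ≤ Real.sqrt 3 * RIC A (6 * s) := mul_nonneg h3pos.le hδ0
  set ρ := Real.sqrt 3 * RIC A (6 * s) with hρ
  have hmain : ∀ n, IsSparse (2 * s) (xs n) ∧ l2norm (x - xs n) ≤ ρ ^ n * l2norm x := by
    intro n
    induction n with
    | zero =>
      constructor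
      · rw [h0]
        simp [IsSparse, Function.support_zero]
      · rw [h0]
        simp
    | succ n ih =>
      obtain ⟨hsp, hbd⟩ := ih
      obtain ⟨hstep, hsp'⟩ := IHT.step_lemma A s x (xs n) (xs (n+1)) hx hsp (hiter n)
      refine ⟨hsp', ?_⟩
      calc l2norm (x - xs (n+1)) ≤ ρ * l2norm (x - xs n) := hstep
        _ ≤ ρ * (ρ ^ n * l2norm x) := mul_le_mul_of_nonneg_left hbd hρ0
        _ = ρ ^ (n+1) * l2norm x := by ring
  refine ⟨hρlt, fun n => (hmain n).2, ?_⟩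
  rw [tendsto_pi_nhds]
  intro i
  have hnorm : ∀ n, ‖xs n i - x i‖ ≤ ρ ^ n * l2norm x := by
    intro n
    have h1 : ‖x i - xs n i‖ ≤ l2norm (x - xs n) := by
      rw [IHT.l2norm_eq]
      have heq : ‖x i - xs n i‖ = Real.sqrt (‖(x - xs n) i‖ ^ 2) := by
        rw [Real.sqrt_sq (norm_nonneg _)]
        rfl
      rw [heq]
      apply Real.sqrt_le_sqrt
      exact Finset.single_le_sum (f := fun j => ‖(x - xs n) j‖ ^ 2)
        (fun j _ => by positivity) (Finset.mem_univ i)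
    rw [norm_sub_rev]
    exact h1.trans ((hmain n).2)
  have hlim : Filter.Tendsto (fun n => ρ ^ n * l2norm x) Filter.atTop (nhds 0) := by
    rw [show (0:ℝ) = 0 * l2norm x by ring]
    exact (tendsto_pow_atTop_nhds_zero_of_lt_one hρ0 hρlt).mul_const _
  rw [tendsto_iff_norm_sub_tendsto_zero]
  exact squeeze_zero (fun n => norm_nonneg _) hnorm hlim
end
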